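/- arXiv:1909.07233 — 3 statements merged into one kernel-verified Lean document; each statement's English description precedes it below -/
import Mathlib

section
/- In Setting (B) with homoskedastic errors σ²_{i,j} = σ² for all i, j: Var(β̂^NPWP) = (τ² + σ²)·Σ_{j=2}^{J−1} v_j²·(1/(j−1) + 1/(J−j)) + 2τ²·Σ_{j=2}^{J−2} Σ_{k=j+1}^{J−1} v_j·v_k·(J−1)/((J−j)(k−1)); Var(β̂^CO) = 2σ²·Σ_{j=2}^{J−1} w_j²·(1 + 1/(J−j)); and Cov(β̂^NPWP, β̂^CO) = σ²·Σ_{j=2}^{J−1} v_j·w_j·(1/(j−1) + 1/(J−j)). -/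
open MeasureTheory ProbabilityTheory Finset

/-- The covariance of two real random variables (with respect to the ambient
probability measure of a `MeasureSpace`). -/
noncomputable def covar {Ω : Type*} [MeasureSpace Ω] (f g : Ω → ℝ) : ℝ :=
  ∫ ω, (f ω - ∫ x, f x) * (g ω - ∫ x, g x)

/-!
Both contrasts are linear in one or two periods of outcomes: `A_j = ∑ᵢ a_j(i) Y_{i,j}` and
`B_j = ∑ᵢ b_j(i) (Y_{i,j} - Y_{i,j-1})`, with weights `a_j = coeffA J j`, `b_j = coeffB J j`.
Independence gives `Cov(Y_{i,j}, Y_{l,k}) = [i = l] (τ² + [j = k] σ²)`, so the covariance of two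
such contrasts is a scalar depending only on their periods times the inner product of their
weight vectors. Differencing cancels τ² from every covariance involving a `B_k`; periods more than
one apart are then uncorrelated, and adjacent ones contribute nothing because
`⟪a_j, b_{j+1}⟫ = ⟪b_j, b_{j+1}⟫ = 0`. Only the within-period estimator keeps cross-period terms,
from the shared cluster effect, with `⟪a_j, a_k⟫ = (J - 1) / ((J - j) (k - 1))` for `j < k`.
-/

section Covariance

variable {Ω : Type*} {mΩ : MeasurableSpace Ω} {μ : Measure Ω}

lemma covariance_sum_mul_sum [IsFiniteMeasure μ] {ι ι' : Type*} {s : Finset ι} {t : Finset ι'}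
    {X : ι → Ω → ℝ} {X' : ι' → Ω → ℝ} (hX : ∀ i ∈ s, MemLp (X i) 2 μ)
    (hX' : ∀ j ∈ t, MemLp (X' j) 2 μ) (a : ι → ℝ) (b : ι' → ℝ) :
    cov[fun ω ↦ ∑ i ∈ s, a i * X i ω, fun ω ↦ ∑ j ∈ t, b j * X' j ω; μ]
      = ∑ i ∈ s, ∑ j ∈ t, a i * b j * cov[X i, X' j; μ] := by
  rw [covariance_fun_sum_fun_sum' (X := fun i ω ↦ a i * X i ω) (Y := fun j ω ↦ b j * X' j ω)
    (fun i hi ↦ (hX i hi).const_mul _) (fun j hj ↦ (hX' j hj).const_mul _)]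
  simp_rw [covariance_const_mul_left, covariance_const_mul_right, mul_assoc]

lemma covariance_sum_mul_sum_of_orthogonal [IsFiniteMeasure μ] {ι : Type*} [DecidableEq ι]
    {s : Finset ι} {X X' : ι → Ω → ℝ} (hX : ∀ i ∈ s, MemLp (X i) 2 μ)
    (hX' : ∀ i ∈ s, MemLp (X' i) 2 μ) {κ : ℝ}
    (hcov : ∀ i ∈ s, ∀ l ∈ s, cov[X i, X' l; μ] = if i = l then κ else 0) (a b : ι → ℝ) :
    cov[fun ω ↦ ∑ i ∈ s, a i * X i ω, fun ω ↦ ∑ i ∈ s, b i * X' i ω; μ]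
      = κ * ∑ i ∈ s, a i * b i := by
  rw [covariance_sum_mul_sum hX hX', mul_sum]
  refine sum_congr rfl fun i hi ↦ ?_
  rw [sum_congr rfl fun l hl ↦ by rw [hcov i hi l hl], sum_eq_single_of_mem i hi
    fun l _ hli ↦ by rw [if_neg hli.symm, mul_zero], if_pos rfl]
  ring

lemma covariance_eq_ite_of_iIndepFun {ι : Type*} [DecidableEq ι] {p : ι → Prop}
    {Z : ι → Ω → ℝ} (hindep : iIndepFun (fun x : Subtype p ↦ Z x.1) μ)
    (hZ : ∀ x, p x → MemLp (Z x) 2 μ) {x y : ι} (hx : p x) (hy : p y) :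
    cov[Z x, Z y; μ] = if x = y then Var[Z x; μ] else 0 := by
  split_ifs with hxy
  · subst hxy
    exact covariance_self (hZ x hx).aemeasurable
  · exact (hindep.indepFun (i := ⟨x, hx⟩) (j := ⟨y, hy⟩) (by simpa using hxy)
      ).covariance_eq_zero (hZ x hx) (hZ y hy)

end Covariance

lemma sum_sum_of_symm {ι M : Type*} [LinearOrder ι] [AddCommMonoid M] (s : Finset ι)
    (F : ι → ι → M) (hF : ∀ j k, F j k = F k j) :
    ∑ j ∈ s, ∑ k ∈ s, F j k = ∑ j ∈ s, F j j + 2 • ∑ j ∈ s, ∑ k ∈ s with j < k, F j k := by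
  have hsplit : ∀ j k, F j k
      = (if k < j then F j k else 0) + (if j = k then F j k else 0)
        + (if j < k then F j k else 0) := by
    intro j k
    rcases lt_trichotomy j k with h | rfl | h
    · simp [h, h.ne, h.not_gt]
    · simp
    · simp [h, h.ne', h.not_gt]
  have hlower : ∑ j ∈ s, ∑ k ∈ s, (if k < j then F j k else 0)
      = ∑ j ∈ s, ∑ k ∈ s, (if j < k then F j k else 0) := by
    rw [sum_comm]
    exact sum_congr rfl fun j _ ↦ sum_congr rfl fun k _ ↦ by rw [hF]
  conv_lhs => enter [2, j, 2, k]; rw [hsplit j k]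
  simp only [sum_add_distrib, hlower, sum_ite_eq, sum_filter, two_nsmul]
  rw [sum_congr rfl fun j hj ↦ if_pos hj]
  abel

lemma sum_sum_mul_ite_eq {ι : Type*} [DecidableEq ι] (s : Finset ι) (a b c : ι → ℝ) :
    ∑ j ∈ s, ∑ k ∈ s, a j * b k * (if j = k then c j else 0) = ∑ j ∈ s, a j * b j * c j := by
  simp only [mul_ite, mul_zero, sum_ite_eq]
  exact sum_congr rfl fun j hj ↦ if_pos hj

lemma sum_Icc_ite_ite {M : Type*} [AddCommMonoid M] {m₁ m₂ n : ℕ} (h₁ : m₁ ≤ m₂)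
    (h₂ : m₂ ≤ n) (a b c : M) :
    ∑ i ∈ Icc 1 n, (if i ≤ m₁ then a else if i ≤ m₂ then b else c)
      = m₁ • a + (m₂ - m₁) • b + (n - m₂) • c := by
  have hpiece : ∀ (p q : ℕ) (d : M), (∀ i, p < i → i ≤ q →
      (if i ≤ m₁ then a else if i ≤ m₂ then b else c) = d) →
      ∑ i ∈ Ioc p q, (if i ≤ m₁ then a else if i ≤ m₂ then b else c) = (q - p) • d := by
    intro p q d hd
    rw [sum_congr rfl fun i hi ↦ hd i (mem_Ioc.1 hi).1 (mem_Ioc.1 hi).2, sum_const,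
      Nat.card_Ioc]
  rw [show Icc 1 n = Ioc 0 n from Icc_add_one_left_eq_Ioc 0 n,
    ← sum_Ioc_consecutive _ (Nat.zero_le m₁) (h₁.trans h₂), ← sum_Ioc_consecutive _ h₁ h₂,
    hpiece 0 m₁ a fun i _ hi ↦ if_pos hi,
    hpiece m₁ m₂ b fun i hi hi' ↦ by rw [if_neg (by omega), if_pos hi'],
    hpiece m₂ n c fun i hi _ ↦ by rw [if_neg (by omega), if_neg (by omega)], Nat.sub_zero,
    add_assoc]

noncomputable def coeffA (J j i : ℕ) : ℝ :=
  if i < j then ((j : ℝ) - 1)⁻¹ else -((J : ℝ) - j)⁻¹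

noncomputable def coeffB (J j i : ℕ) : ℝ :=
  if i + 1 = j then 1 else if j ≤ i then -((J : ℝ) - j)⁻¹ else 0

noncomputable def contrastA {Ω : Type*} (J : ℕ) (Y : ℕ → ℕ → Ω → ℝ) (j : ℕ) : Ω → ℝ :=
  fun ω ↦ ∑ i ∈ Icc 1 (J - 1), coeffA J j i * Y i j ω

noncomputable def contrastB {Ω : Type*} (J : ℕ) (Y : ℕ → ℕ → Ω → ℝ) (j : ℕ) : Ω → ℝ :=
  fun ω ↦ ∑ i ∈ Icc 1 (J - 1), coeffB J j i * (Y i j - Y i (j - 1)) ω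

section Weights

variable {J j k : ℕ}

lemma sum_coeffA_mul (hj : 1 ≤ j) (hjJ : j ≤ J) (g : ℕ → ℝ) :
    ∑ i ∈ Icc 1 (J - 1), coeffA J j i * g i
      = ((j : ℝ) - 1)⁻¹ * ∑ i ∈ Icc 1 (j - 1), g i
        - ((J : ℝ) - j)⁻¹ * ∑ i ∈ Icc j (J - 1), g i := by
  have hsplit : Icc 1 (J - 1) = Icc 1 (j - 1) ∪ Icc j (J - 1) := by
    ext i; simp only [mem_union, mem_Icc]; omega
  have hdisj : Disjoint (Icc 1 (j - 1)) (Icc j (J - 1)) := by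
    rw [disjoint_left]; intro i; simp only [mem_Icc]; omega
  rw [hsplit, sum_union hdisj, mul_sum, mul_sum, sub_eq_add_neg, ← sum_neg_distrib]
  congr 1 <;> refine sum_congr rfl fun i hi ↦ ?_ <;> rw [mem_Icc] at hi
  · rw [coeffA, if_pos (by omega)]
  · rw [coeffA, if_neg (by omega), neg_mul]

lemma sum_coeffB_mul (hj : 2 ≤ j) (hjJ : j ≤ J) (g : ℕ → ℝ) :
    ∑ i ∈ Icc 1 (J - 1), coeffB J j i * g i
      = g (j - 1) - ((J : ℝ) - j)⁻¹ * ∑ i ∈ Icc j (J - 1), g i := by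
  have hsplit : Icc 1 (J - 1) = Icc 1 (j - 2) ∪ insert (j - 1) (Icc j (J - 1)) := by
    ext i; simp only [mem_union, mem_insert, mem_Icc]; omega
  have hdisj : Disjoint (Icc 1 (j - 2)) (insert (j - 1) (Icc j (J - 1))) := by
    rw [disjoint_left]; intro i; simp only [mem_insert, mem_Icc]; omega
  rw [hsplit, sum_union hdisj, sum_insert (by simp only [mem_Icc]; omega),
    sum_eq_zero fun i hi ↦ by
      rw [mem_Icc] at hi; rw [coeffB, if_neg (by omega), if_neg (by omega), zero_mul],
    coeffB, if_pos (by omega), mul_sum, sub_eq_add_neg, ← sum_neg_distrib, zero_add, one_mul]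
  refine congrArg (g (j - 1) + ·) (sum_congr rfl fun i hi ↦ ?_)
  rw [mem_Icc] at hi
  rw [coeffB, if_neg (by omega), if_pos (by omega), neg_mul]

lemma coeff_denominators_ne_zero (hj : 2 ≤ j) (hjJ : j < J) : ((j : ℝ) - 1) ≠ 0 ∧ ((J : ℝ) - j) ≠ 0 := by
  have : (2 : ℝ) ≤ j := by exact_mod_cast hj
  have : (j : ℝ) < J := by exact_mod_cast hjJ
  constructor <;> linarith

lemma sum_coeffA_mul_coeffA (hj : 2 ≤ j) (hjJ : j < J) :
    ∑ i ∈ Icc 1 (J - 1), coeffA J j i * coeffA J j i = ((j : ℝ) - 1)⁻¹ + ((J : ℝ) - j)⁻¹ := by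
  have hpw : ∀ i ∈ Icc 1 (J - 1), coeffA J j i * coeffA J j i
      = if i ≤ j - 1 then ((j : ℝ) - 1)⁻¹ ^ 2
        else if i ≤ j - 1 then 0 else ((J : ℝ) - j)⁻¹ ^ 2 := by
    intro i _
    unfold coeffA
    split_ifs <;> first | omega | ring
  obtain ⟨h1, h2⟩ := coeff_denominators_ne_zero hj hjJ
  rw [sum_congr rfl hpw, sum_Icc_ite_ite le_rfl (by omega), show J - 1 - (j - 1) = J - j by omega]
  push_cast [nsmul_eq_mul, Nat.cast_sub (by omega : 1 ≤ j), Nat.cast_sub hjJ.le]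
  field_simp
  ring

lemma sum_coeffA_mul_coeffA_of_lt (hj : 2 ≤ j) (hjk : j < k) (hkJ : k < J) :
    ∑ i ∈ Icc 1 (J - 1), coeffA J j i * coeffA J k i
      = ((J : ℝ) - 1) / (((J : ℝ) - j) * ((k : ℝ) - 1)) := by
  have hpw : ∀ i ∈ Icc 1 (J - 1), coeffA J j i * coeffA J k i
      = if i ≤ j - 1 then ((j : ℝ) - 1)⁻¹ * ((k : ℝ) - 1)⁻¹
        else if i ≤ k - 1 then -((J : ℝ) - j)⁻¹ * ((k : ℝ) - 1)⁻¹
        else ((J : ℝ) - j)⁻¹ * ((J : ℝ) - k)⁻¹ := by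
    intro i _
    unfold coeffA
    split_ifs <;> first | omega | ring
  obtain ⟨h1, h2⟩ := coeff_denominators_ne_zero hj (hjk.trans hkJ)
  obtain ⟨h3, h4⟩ := coeff_denominators_ne_zero (hj.trans hjk.le) hkJ
  rw [sum_congr rfl hpw, sum_Icc_ite_ite (by omega) (by omega),
    show k - 1 - (j - 1) = k - j by omega, show J - 1 - (k - 1) = J - k by omega]
  push_cast [nsmul_eq_mul, Nat.cast_sub (by omega : 1 ≤ j), Nat.cast_sub hjk.le,
    Nat.cast_sub hkJ.le]
  field_simp
  ring

lemma sum_sum_mul_sum_coeffA_mul_coeffA (v : ℕ → ℝ) :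
    ∑ j ∈ Icc 2 (J - 1), ∑ k ∈ Icc 2 (J - 1),
        v j * v k * ∑ i ∈ Icc 1 (J - 1), coeffA J j i * coeffA J k i
      = ∑ j ∈ Icc 2 (J - 1), v j ^ 2 * (((j : ℝ) - 1)⁻¹ + ((J : ℝ) - j)⁻¹)
        + 2 * ∑ j ∈ Icc 2 (J - 2), ∑ k ∈ Icc (j + 1) (J - 1),
            v j * v k * ((J : ℝ) - 1) / (((J : ℝ) - j) * ((k : ℝ) - 1)) := by
  rw [sum_sum_of_symm _ _ fun j k ↦ by simp only [mul_comm], nsmul_eq_mul, Nat.cast_ofNat]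
  congr 1
  · refine sum_congr rfl fun j hj ↦ ?_
    rw [mem_Icc] at hj
    rw [sum_coeffA_mul_coeffA hj.1 (by omega), sq]
  refine congrArg (2 * ·) ?_
  rw [eq_comm, sum_subset (Icc_subset_Icc_right (show J - 2 ≤ J - 1 by omega)) fun j hj hj' ↦ by
    rw [mem_Icc] at hj hj'
    rw [Icc_eq_empty (by omega), sum_empty]]
  refine sum_congr rfl fun j hj ↦ ?_
  rw [mem_Icc] at hj
  have hfilter : {k ∈ Icc 2 (J - 1) | j < k} = Icc (j + 1) (J - 1) := by
    ext k; simp only [mem_filter, mem_Icc]; omega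
  rw [hfilter]
  refine sum_congr rfl fun k hk ↦ ?_
  rw [mem_Icc] at hk
  rw [sum_coeffA_mul_coeffA_of_lt hj.1 (by omega) (by omega)]
  ring

lemma sum_coeffB_mul_coeffB (hj : 2 ≤ j) (hjJ : j < J) :
    ∑ i ∈ Icc 1 (J - 1), coeffB J j i * coeffB J j i = 1 + ((J : ℝ) - j)⁻¹ := by
  have hpw : ∀ i ∈ Icc 1 (J - 1), coeffB J j i * coeffB J j i
      = if i ≤ j - 2 then 0 else if i ≤ j - 1 then 1 else ((J : ℝ) - j)⁻¹ ^ 2 := by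
    intro i _
    unfold coeffB
    split_ifs <;> first | omega | ring
  obtain ⟨h1, h2⟩ := coeff_denominators_ne_zero hj hjJ
  rw [sum_congr rfl hpw, sum_Icc_ite_ite (by omega) (by omega),
    show j - 1 - (j - 2) = 1 by omega, show J - 1 - (j - 1) = J - j by omega]
  push_cast [nsmul_eq_mul, Nat.cast_sub hjJ.le]
  field_simp
  ring

lemma sum_coeffB_mul_coeffB_succ (hj : 2 ≤ j) (hjJ : j + 1 < J) :
    ∑ i ∈ Icc 1 (J - 1), coeffB J j i * coeffB J (j + 1) i = 0 := by
  have hpw : ∀ i ∈ Icc 1 (J - 1), coeffB J j i * coeffB J (j + 1) i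
      = if i ≤ j - 1 then 0 else if i ≤ j then -((J : ℝ) - j)⁻¹
        else ((J : ℝ) - j)⁻¹ * ((J : ℝ) - (j + 1 : ℕ))⁻¹ := by
    intro i _
    unfold coeffB
    split_ifs <;> first | omega | ring
  obtain ⟨h1, h2⟩ := coeff_denominators_ne_zero hj (by omega : j < J)
  obtain ⟨h3, h4⟩ := coeff_denominators_ne_zero (by omega) hjJ
  rw [sum_congr rfl hpw, sum_Icc_ite_ite (by omega) (by omega),
    show j - (j - 1) = 1 by omega, show J - 1 - j = J - (j + 1) by omega]
  push_cast [nsmul_eq_mul, Nat.cast_sub hjJ.le] at h4 ⊢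
  field_simp
  ring

lemma sum_coeffA_mul_coeffB (hj : 2 ≤ j) (hjJ : j < J) :
    ∑ i ∈ Icc 1 (J - 1), coeffA J j i * coeffB J j i = ((j : ℝ) - 1)⁻¹ + ((J : ℝ) - j)⁻¹ := by
  have hpw : ∀ i ∈ Icc 1 (J - 1), coeffA J j i * coeffB J j i
      = if i ≤ j - 2 then 0
        else if i ≤ j - 1 then ((j : ℝ) - 1)⁻¹ else ((J : ℝ) - j)⁻¹ ^ 2 := by
    intro i _
    unfold coeffA coeffB
    split_ifs <;> first | omega | ring
  obtain ⟨h1, h2⟩ := coeff_denominators_ne_zero hj hjJ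
  rw [sum_congr rfl hpw, sum_Icc_ite_ite (by omega) (by omega),
    show j - 1 - (j - 2) = 1 by omega, show J - 1 - (j - 1) = J - j by omega]
  push_cast [nsmul_eq_mul, Nat.cast_sub hjJ.le]
  field_simp
  ring

lemma sum_coeffA_mul_coeffB_succ (hj : 2 ≤ j) (hjJ : j + 1 < J) :
    ∑ i ∈ Icc 1 (J - 1), coeffA J j i * coeffB J (j + 1) i = 0 := by
  have hpw : ∀ i ∈ Icc 1 (J - 1), coeffA J j i * coeffB J (j + 1) i
      = if i ≤ j - 1 then 0 else if i ≤ j then -((J : ℝ) - j)⁻¹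
        else ((J : ℝ) - j)⁻¹ * ((J : ℝ) - (j + 1 : ℕ))⁻¹ := by
    intro i _
    unfold coeffA coeffB
    split_ifs <;> first | omega | ring
  obtain ⟨h1, h2⟩ := coeff_denominators_ne_zero hj (by omega : j < J)
  obtain ⟨h3, h4⟩ := coeff_denominators_ne_zero (by omega) hjJ
  rw [sum_congr rfl hpw, sum_Icc_ite_ite (by omega) (by omega),
    show j - (j - 1) = 1 by omega, show J - 1 - j = J - (j + 1) by omega]
  push_cast [nsmul_eq_mul, Nat.cast_sub hjJ.le] at h4 ⊢
  field_simp
  ring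

end Weights

section Contrasts

variable {Ω : Type*} {mΩ : MeasurableSpace Ω} {μ : Measure Ω} {J j k : ℕ} {τsq σ2 : ℝ}
  {Y : ℕ → ℕ → Ω → ℝ}

def HasClusterCov (μ : Measure Ω) (J : ℕ) (τsq σ2 : ℝ) (Y : ℕ → ℕ → Ω → ℝ) : Prop :=
  (∀ i ∈ Icc 1 (J - 1), ∀ j ∈ Icc 1 J, MemLp (Y i j) 2 μ) ∧
    ∀ i ∈ Icc 1 (J - 1), ∀ l ∈ Icc 1 (J - 1), ∀ j ∈ Icc 1 J, ∀ k ∈ Icc 1 J,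
      cov[Y i j, Y l k; μ] = if i = l then τsq + if j = k then σ2 else 0 else 0

-- `Sum.inl i` indexes the cluster effect `α i`, `Sum.inr (i, j)` the error `ε i j`.
def noiseIndex (J : ℕ) (x : ℕ ⊕ ℕ × ℕ) : Prop :=
  (∀ i, x = Sum.inl i → i ∈ Icc 1 (J - 1)) ∧
    (∀ i j, x = Sum.inr (i, j) → i ∈ Icc 1 (J - 1) ∧ j ∈ Icc 1 J)

namespace HasClusterCov

lemma of_iIndepFun [IsProbabilityMeasure μ] {m : ℕ → ℕ → ℝ} {α : ℕ → Ω → ℝ}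
    {ε : ℕ → ℕ → Ω → ℝ}
    (hindep : iIndepFun
      (fun x : Subtype (noiseIndex J) ↦ Sum.elim α (fun q ↦ ε q.1 q.2) x.1) μ)
    (hVα : ∀ i ∈ Icc 1 (J - 1), Var[α i; μ] = τsq)
    (hL2α : ∀ i ∈ Icc 1 (J - 1), MemLp (α i) 2 μ)
    (hVε : ∀ i ∈ Icc 1 (J - 1), ∀ j ∈ Icc 1 J, Var[ε i j; μ] = σ2)
    (hL2ε : ∀ i ∈ Icc 1 (J - 1), ∀ j ∈ Icc 1 J, MemLp (ε i j) 2 μ)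
    (hY : ∀ i j, Y i j = fun ω ↦ m i j + (α i + ε i j) ω) :
    HasClusterCov μ J τsq σ2 Y := by
  have hL2 : ∀ {i j}, i ∈ Icc 1 (J - 1) → j ∈ Icc 1 J → MemLp (α i + ε i j) 2 μ :=
    fun hi hj ↦ (hL2α _ hi).add (hL2ε _ hi _ hj)
  refine ⟨fun i hi j hj ↦ by rw [hY]; exact (memLp_const (m i j)).add (hL2 hi hj),
    fun i hi l hl j hj k hk ↦ ?_⟩
  have hZ : ∀ x, noiseIndex J x → MemLp (Sum.elim α (fun q ↦ ε q.1 q.2) x) 2 μ := by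
    rintro (i | ⟨i, j⟩) ⟨hα, hε⟩
    · exact hL2α i (hα i rfl)
    · exact hL2ε i (hε i j rfl).1 j (hε i j rfl).2
  have hα : ∀ {i}, i ∈ Icc 1 (J - 1) → noiseIndex J (.inl i) := fun hi ↦
    ⟨by rintro _ ⟨⟩; exact hi, by rintro _ _ ⟨⟩⟩
  have hε : ∀ {i j}, i ∈ Icc 1 (J - 1) → j ∈ Icc 1 J → noiseIndex J (.inr (i, j)) :=
    fun hi hj ↦ ⟨by rintro _ ⟨⟩, by rintro _ _ ⟨⟩; exact ⟨hi, hj⟩⟩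
  have hcov := fun {x y} (hx : noiseIndex J x) (hy : noiseIndex J y) ↦
    covariance_eq_ite_of_iIndepFun hindep hZ hx hy
  have hαα : cov[α i, α l; μ] = if i = l then τsq else 0 := by
    simpa [hVα i hi] using hcov (hα hi) (hα hl)
  have hαε : ∀ {i l k}, i ∈ Icc 1 (J - 1) → l ∈ Icc 1 (J - 1) → k ∈ Icc 1 J →
      cov[α i, ε l k; μ] = 0 := fun hi hl hk ↦ by simpa using hcov (hα hi) (hε hl hk)
  have hεε : cov[ε i j, ε l k; μ] = if i = l ∧ j = k then σ2 else 0 := by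
    simpa [hVε i hi j hj] using hcov (hε hi hj) (hε hl hk)
  rw [hY, hY, covariance_const_add_left ((hL2 hi hj).integrable one_le_two),
    covariance_const_add_right ((hL2 hl hk).integrable one_le_two),
    covariance_add_left (hL2α i hi) (hL2ε i hi j hj) (hL2 hl hk),
    covariance_add_right (hL2α i hi) (hL2α l hl) (hL2ε l hl k hk),
    covariance_add_right (hL2ε i hi j hj) (hL2α l hl) (hL2ε l hl k hk),
    hαα, hαε hi hl hk, covariance_comm, hαε hl hi hj, hεε]
  by_cases hil : i = l <;> simp [hil]

end HasClusterCov

namespace HasClusterCov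

lemma memLp_sub (hY : HasClusterCov μ J τsq σ2 Y) (hj : j ∈ Icc 2 J) :
    ∀ i ∈ Icc 1 (J - 1), MemLp (Y i j - Y i (j - 1)) 2 μ := by
  rw [mem_Icc] at hj
  exact fun i hi ↦ (hY.1 i hi j (by rw [mem_Icc]; omega)).sub
    (hY.1 i hi (j - 1) (by rw [mem_Icc]; omega))

lemma memLp_contrastA (hY : HasClusterCov μ J τsq σ2 Y) (hj : j ∈ Icc 1 J) :
    MemLp (contrastA J Y j) 2 μ :=
  memLp_finsetSum _ fun i hi ↦ (hY.1 i hi j hj).const_mul _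

lemma memLp_contrastB (hY : HasClusterCov μ J τsq σ2 Y) (hj : j ∈ Icc 2 J) :
    MemLp (contrastB J Y j) 2 μ :=
  memLp_finsetSum _ fun i hi ↦ (hY.memLp_sub hj i hi).const_mul _

lemma covariance_contrastA_contrastA [IsFiniteMeasure μ] (hY : HasClusterCov μ J τsq σ2 Y)
    (hj : j ∈ Icc 1 J) (hk : k ∈ Icc 1 J) :
    cov[contrastA J Y j, contrastA J Y k; μ]
      = (τsq + if j = k then σ2 else 0) * ∑ i ∈ Icc 1 (J - 1), coeffA J j i * coeffA J k i :=
  covariance_sum_mul_sum_of_orthogonal (fun i hi ↦ hY.1 i hi j hj) (fun i hi ↦ hY.1 i hi k hk)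
    (fun i hi l hl ↦ hY.2 i hi l hl j hj k hk) _ _

lemma covariance_contrastA_contrastB [IsFiniteMeasure μ] (hY : HasClusterCov μ J τsq σ2 Y)
    (hj : j ∈ Icc 2 (J - 1)) (hk : k ∈ Icc 2 (J - 1)) :
    cov[contrastA J Y j, contrastB J Y k; μ]
      = if j = k then σ2 * (((j : ℝ) - 1)⁻¹ + ((J : ℝ) - j)⁻¹) else 0 := by
  rw [mem_Icc] at hj hk
  have hj' : j ∈ Icc 1 J := by rw [mem_Icc]; omega
  have hk' : k ∈ Icc 1 J := by rw [mem_Icc]; omega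
  have hk₁ : k - 1 ∈ Icc 1 J := by rw [mem_Icc]; omega
  have hcov : ∀ i ∈ Icc 1 (J - 1), ∀ l ∈ Icc 1 (J - 1), cov[Y i j, Y l k - Y l (k - 1); μ]
      = if i = l then (if j = k then σ2 else 0) - (if j = k - 1 then σ2 else 0) else 0 := by
    intro i hi l hl
    rw [covariance_sub_right (hY.1 i hi j hj') (hY.1 l hl k hk') (hY.1 l hl (k - 1) hk₁),
      hY.2 i hi l hl j hj' k hk', hY.2 i hi l hl j hj' (k - 1) hk₁]
    split_ifs <;> ring
  unfold contrastA contrastB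
  rw [covariance_sum_mul_sum_of_orthogonal (fun i hi ↦ hY.1 i hi j hj')
    (hY.memLp_sub (by rw [mem_Icc]; omega)) hcov]
  rcases eq_or_ne j k with rfl | hjk
  · rw [sum_coeffA_mul_coeffB hj.1 (by omega), if_pos rfl, if_pos rfl, if_neg (by omega),
      sub_zero]
  rcases eq_or_ne k (j + 1) with rfl | hkj
  · rw [sum_coeffA_mul_coeffB_succ hj.1 (by omega), mul_zero, if_neg hjk]
  · rw [if_neg hjk, if_neg hjk, if_neg (by omega), sub_zero, zero_mul]

lemma covariance_contrastB_contrastB [IsFiniteMeasure μ] (hY : HasClusterCov μ J τsq σ2 Y)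
    (hj : j ∈ Icc 2 (J - 1)) (hk : k ∈ Icc 2 (J - 1)) :
    cov[contrastB J Y j, contrastB J Y k; μ]
      = if j = k then 2 * σ2 * (1 + ((J : ℝ) - j)⁻¹) else 0 := by
  rw [mem_Icc] at hj hk
  have hj' : j ∈ Icc 1 J := by rw [mem_Icc]; omega
  have hj₁ : j - 1 ∈ Icc 1 J := by rw [mem_Icc]; omega
  have hk' : k ∈ Icc 1 J := by rw [mem_Icc]; omega
  have hk₁ : k - 1 ∈ Icc 1 J := by rw [mem_Icc]; omega
  have hcov : ∀ i ∈ Icc 1 (J - 1), ∀ l ∈ Icc 1 (J - 1),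
      cov[Y i j - Y i (j - 1), Y l k - Y l (k - 1); μ]
        = if i = l then (if j = k then σ2 else 0) - (if j = k - 1 then σ2 else 0)
            - (if j - 1 = k then σ2 else 0) + (if j - 1 = k - 1 then σ2 else 0) else 0 := by
    intro i hi l hl
    rw [covariance_sub_sub (hY.1 i hi j hj') (hY.1 i hi (j - 1) hj₁) (hY.1 l hl k hk')
      (hY.1 l hl (k - 1) hk₁), hY.2 i hi l hl j hj' k hk', hY.2 i hi l hl j hj' (k - 1) hk₁,
      hY.2 i hi l hl (j - 1) hj₁ k hk', hY.2 i hi l hl (j - 1) hj₁ (k - 1) hk₁]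
    split_ifs <;> ring
  unfold contrastB
  rw [covariance_sum_mul_sum_of_orthogonal
    (hY.memLp_sub (by rw [mem_Icc]; omega)) (hY.memLp_sub (by rw [mem_Icc]; omega)) hcov]
  rcases eq_or_ne j k with rfl | hjk
  · rw [sum_coeffB_mul_coeffB hj.1 (by omega)]
    simp only [if_true, if_neg (show j ≠ j - 1 by omega), if_neg (show j - 1 ≠ j by omega)]
    ring
  rcases eq_or_ne k (j + 1) with rfl | hkj
  · rw [sum_coeffB_mul_coeffB_succ hj.1 (by omega), mul_zero, if_neg hjk]
  rcases eq_or_ne j (k + 1) with rfl | hjk'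
  · rw [sum_congr rfl fun i _ ↦ mul_comm _ _, sum_coeffB_mul_coeffB_succ hk.1 (by omega),
      mul_zero, if_neg hjk]
  · simp only [if_neg hjk, if_neg (show j ≠ k - 1 by omega), if_neg (show j - 1 ≠ k by omega),
      if_neg (show j - 1 ≠ k - 1 by omega)]
    ring

lemma variance_sum_contrastA [IsFiniteMeasure μ] (hY : HasClusterCov μ J τsq σ2 Y) (v : ℕ → ℝ) :
    Var[fun ω ↦ ∑ j ∈ Icc 2 (J - 1), v j * contrastA J Y j ω; μ]
      = (τsq + σ2) * ∑ j ∈ Icc 2 (J - 1), v j ^ 2 * (((j : ℝ) - 1)⁻¹ + ((J : ℝ) - j)⁻¹)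
        + 2 * τsq * ∑ j ∈ Icc 2 (J - 2), ∑ k ∈ Icc (j + 1) (J - 1),
            v j * v k * ((J : ℝ) - 1) / (((J : ℝ) - j) * ((k : ℝ) - 1)) := by
  have hL2 : ∀ j ∈ Icc 2 (J - 1), MemLp (contrastA J Y j) 2 μ := fun j hj ↦
    hY.memLp_contrastA (by rw [mem_Icc] at hj ⊢; omega)
  let S (j k : ℕ) : ℝ := ∑ i ∈ Icc 1 (J - 1), coeffA J j i * coeffA J k i
  have hdiag : ∀ j ∈ Icc 2 (J - 1),
      v j * v j * S j j = v j ^ 2 * (((j : ℝ) - 1)⁻¹ + ((J : ℝ) - j)⁻¹) := by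
    intro j hj
    rw [mem_Icc] at hj
    rw [show S j j = _ from sum_coeffA_mul_coeffA (J := J) hj.1 (by omega), sq]
  rw [← covariance_self (memLp_finsetSum _ fun j hj ↦ (hL2 j hj).const_mul _).aemeasurable,
    covariance_sum_mul_sum hL2 hL2]
  calc ∑ j ∈ Icc 2 (J - 1), ∑ k ∈ Icc 2 (J - 1),
        v j * v k * cov[contrastA J Y j, contrastA J Y k; μ]
      = ∑ j ∈ Icc 2 (J - 1), ∑ k ∈ Icc 2 (J - 1),
          (τsq * (v j * v k * S j k) + if j = k then σ2 * (v j * v k * S j k) else 0) := by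
        refine sum_congr rfl fun j hj ↦ sum_congr rfl fun k hk ↦ ?_
        rw [hY.covariance_contrastA_contrastA (by rw [mem_Icc] at hj ⊢; omega)
          (by rw [mem_Icc] at hk ⊢; omega)]
        split_ifs <;> ring
    _ = τsq * ∑ j ∈ Icc 2 (J - 1), ∑ k ∈ Icc 2 (J - 1), v j * v k * S j k
          + σ2 * ∑ j ∈ Icc 2 (J - 1), v j * v j * S j j := by
        simp only [sum_add_distrib, sum_ite_eq, mul_sum]
        exact congrArg _ (sum_congr rfl fun j hj ↦ if_pos hj)
    _ = _ := by
        rw [sum_sum_mul_sum_coeffA_mul_coeffA, sum_congr rfl hdiag]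
        ring

lemma variance_sum_contrastB [IsFiniteMeasure μ] (hY : HasClusterCov μ J τsq σ2 Y) (w : ℕ → ℝ) :
    Var[fun ω ↦ ∑ j ∈ Icc 2 (J - 1), w j * contrastB J Y j ω; μ]
      = 2 * σ2 * ∑ j ∈ Icc 2 (J - 1), w j ^ 2 * (1 + ((J : ℝ) - j)⁻¹) := by
  have hL2 : ∀ j ∈ Icc 2 (J - 1), MemLp (contrastB J Y j) 2 μ := fun j hj ↦
    hY.memLp_contrastB (by rw [mem_Icc] at hj ⊢; omega)
  rw [← covariance_self (memLp_finsetSum _ fun j hj ↦ (hL2 j hj).const_mul _).aemeasurable,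
    covariance_sum_mul_sum hL2 hL2, sum_congr rfl fun j hj ↦ sum_congr rfl fun k hk ↦ by
      rw [hY.covariance_contrastB_contrastB hj hk], sum_sum_mul_ite_eq, mul_sum]
  exact sum_congr rfl fun j _ ↦ by ring

lemma covariance_sum_contrastA_sum_contrastB [IsFiniteMeasure μ]
    (hY : HasClusterCov μ J τsq σ2 Y) (v w : ℕ → ℝ) :
    cov[fun ω ↦ ∑ j ∈ Icc 2 (J - 1), v j * contrastA J Y j ω,
        fun ω ↦ ∑ j ∈ Icc 2 (J - 1), w j * contrastB J Y j ω; μ]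
      = σ2 * ∑ j ∈ Icc 2 (J - 1), v j * w j * (((j : ℝ) - 1)⁻¹ + ((J : ℝ) - j)⁻¹) := by
  rw [covariance_sum_mul_sum (fun j hj ↦ hY.memLp_contrastA (by rw [mem_Icc] at hj ⊢; omega))
    (fun j hj ↦ hY.memLp_contrastB (by rw [mem_Icc] at hj ⊢; omega)),
    sum_congr rfl fun j hj ↦ sum_congr rfl fun k hk ↦ by
      rw [hY.covariance_contrastA_contrastB hj hk], sum_sum_mul_ite_eq, mul_sum]
  exact sum_congr rfl fun j _ ↦ by ring

end HasClusterCov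
end Contrasts

theorem stmt_16_general
    {Ω : Type*} [MeasureSpace Ω] [IsProbabilityMeasure (ℙ : Measure Ω)]
    (J : ℕ)
    (μc β τsq : ℝ) (θ : ℕ → ℝ) (σsq : ℕ → ℕ → ℝ)
    (α : ℕ → Ω → ℝ) (ε : ℕ → ℕ → Ω → ℝ)
    -- the random variables {α_i} ∪ {ε_{i,j}} are mutually independent
    (hindep : iIndepFun
      (fun x : {x : ℕ ⊕ ℕ × ℕ // (∀ i, x = Sum.inl i → i ∈ Icc 1 (J - 1)) ∧
          (∀ i j, x = Sum.inr (i, j) → i ∈ Icc 1 (J - 1) ∧ j ∈ Icc 1 J)} =>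
        Sum.elim α (fun q => ε q.1 q.2) x.1) ℙ)
    -- moment assumptions
    (hVα : ∀ i ∈ Icc 1 (J - 1), variance (α i) ℙ = τsq)
    (hL2α : ∀ i ∈ Icc 1 (J - 1), MemLp (α i) 2 ℙ)
    (hVε : ∀ i ∈ Icc 1 (J - 1), ∀ j ∈ Icc 1 J, variance (ε i j) ℙ = σsq i j)
    (hL2ε : ∀ i ∈ Icc 1 (J - 1), ∀ j ∈ Icc 1 J, MemLp (ε i j) 2 ℙ)
    -- the mixed effects model: cluster i is on intervention in periods j > i
    (Y : ℕ → ℕ → Ω → ℝ)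
    (hY : ∀ i j ω, Y i j ω = μc + α i ω + θ j + (if i < j then β else 0) + ε i j ω)
    -- the within-period contrast A_j
    (A : ℕ → Ω → ℝ)
    (hA : ∀ j ω, A j ω = ((j : ℝ) - 1)⁻¹ * ∑ i ∈ Icc 1 (j - 1), Y i j ω
        - ((J : ℝ) - (j : ℝ))⁻¹ * ∑ i ∈ Icc j (J - 1), Y i j ω)
    -- the crossover contrast B_j
    (B : ℕ → Ω → ℝ)
    (hB : ∀ j ω, B j ω = Y (j - 1) j ω - Y (j - 1) (j - 1) ω
        - ((J : ℝ) - (j : ℝ))⁻¹ * ∑ l ∈ Icc j (J - 1), (Y l j ω - Y l (j - 1) ω))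
    -- the non-parametric within-period estimator with deterministic weights v
    (v : ℕ → ℝ) (βNPWP : Ω → ℝ)
    (hNPWP : ∀ ω, βNPWP ω = ∑ j ∈ Icc 2 (J - 1), v j * A j ω)
    -- the crossover estimator with deterministic weights w
    (w : ℕ → ℝ) (βCO : Ω → ℝ)
    (hCO : ∀ ω, βCO ω = ∑ j ∈ Icc 2 (J - 1), w j * B j ω)
    -- homoskedastic errors
    (σ2 : ℝ) (hσ : ∀ i ∈ Icc 1 (J - 1), ∀ j ∈ Icc 1 J, σsq i j = σ2)
    :
    variance βNPWP ℙ
        = (τsq + σ2) * ∑ j ∈ Icc 2 (J - 1), (v j) ^ 2 *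
              (((j : ℝ) - 1)⁻¹ + ((J : ℝ) - (j : ℝ))⁻¹)
          + 2 * τsq * ∑ j ∈ Icc 2 (J - 2), ∑ k ∈ Icc (j + 1) (J - 1),
              v j * v k * ((J : ℝ) - 1) / (((J : ℝ) - (j : ℝ)) * ((k : ℝ) - 1))
      ∧ variance βCO ℙ
        = 2 * σ2 * ∑ j ∈ Icc 2 (J - 1), (w j) ^ 2 * (1 + ((J : ℝ) - (j : ℝ))⁻¹)
      ∧ covar βNPWP βCO
        = σ2 * ∑ j ∈ Icc 2 (J - 1), v j * w j *
            (((j : ℝ) - 1)⁻¹ + ((J : ℝ) - (j : ℝ))⁻¹) := by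
  have hcov : HasClusterCov ℙ J τsq σ2 Y :=
    .of_iIndepFun (m := fun i j ↦ μc + θ j + if i < j then β else 0) hindep hVα hL2α
      (fun i hi j hj ↦ (hVε i hi j hj).trans (hσ i hi j hj)) hL2ε
      fun i j ↦ funext fun ω ↦ by rw [hY, Pi.add_apply]; ring
  have hN : βNPWP = fun ω ↦ ∑ j ∈ Icc 2 (J - 1), v j * contrastA J Y j ω :=
    funext fun ω ↦ (hNPWP ω).trans <| sum_congr rfl fun j hj ↦ by
      rw [mem_Icc] at hj
      rw [hA, contrastA, sum_coeffA_mul (by omega) (by omega)]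
  have hC : βCO = fun ω ↦ ∑ j ∈ Icc 2 (J - 1), w j * contrastB J Y j ω :=
    funext fun ω ↦ (hCO ω).trans <| sum_congr rfl fun j hj ↦ by
      rw [mem_Icc] at hj
      rw [hB, contrastB, sum_coeffB_mul hj.1 (by omega)]
      rfl
  rw [hN, hC]
  exact ⟨hcov.variance_sum_contrastA v, hcov.variance_sum_contrastB w,
    hcov.covariance_sum_contrastA_sum_contrastB v w⟩

/-- **Variances and covariance of the two estimators under homoskedastic errors in Setting (B).** -/
theorem stmt_16
    {Ω : Type*} [MeasureSpace Ω] [IsProbabilityMeasure (ℙ : Measure Ω)]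
    (J : ℕ) (hJ : 3 ≤ J)
    (μc β τsq : ℝ) (θ : ℕ → ℝ) (σsq : ℕ → ℕ → ℝ)
    (α : ℕ → Ω → ℝ) (ε : ℕ → ℕ → Ω → ℝ)
    (hmα : ∀ i, Measurable (α i)) (hmε : ∀ i j, Measurable (ε i j))
    -- the random variables {α_i} ∪ {ε_{i,j}} are mutually independent
    (hindep : iIndepFun
      (fun x : {x : ℕ ⊕ ℕ × ℕ // (∀ i, x = Sum.inl i → i ∈ Icc 1 (J - 1)) ∧
          (∀ i j, x = Sum.inr (i, j) → i ∈ Icc 1 (J - 1) ∧ j ∈ Icc 1 J)} =>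
        Sum.elim α (fun q => ε q.1 q.2) x.1) ℙ)
    -- moment assumptions
    (hEα : ∀ i ∈ Icc 1 (J - 1), ∫ ω, α i ω ∂ℙ = 0)
    (hVα : ∀ i ∈ Icc 1 (J - 1), variance (α i) ℙ = τsq)
    (hL2α : ∀ i ∈ Icc 1 (J - 1), MemLp (α i) 2 ℙ)
    (hEε : ∀ i ∈ Icc 1 (J - 1), ∀ j ∈ Icc 1 J, ∫ ω, ε i j ω ∂ℙ = 0)
    (hVε : ∀ i ∈ Icc 1 (J - 1), ∀ j ∈ Icc 1 J, variance (ε i j) ℙ = σsq i j)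
    (hL2ε : ∀ i ∈ Icc 1 (J - 1), ∀ j ∈ Icc 1 J, MemLp (ε i j) 2 ℙ)
    -- the mixed effects model: cluster i is on intervention in periods j > i
    (Y : ℕ → ℕ → Ω → ℝ)
    (hY : ∀ i j ω, Y i j ω = μc + α i ω + θ j + (if i < j then β else 0) + ε i j ω)
    -- the within-period contrast A_j
    (A : ℕ → Ω → ℝ)
    (hA : ∀ j ω, A j ω = ((j : ℝ) - 1)⁻¹ * ∑ i ∈ Icc 1 (j - 1), Y i j ω
        - ((J : ℝ) - (j : ℝ))⁻¹ * ∑ i ∈ Icc j (J - 1), Y i j ω)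
    -- the crossover contrast B_j
    (B : ℕ → Ω → ℝ)
    (hB : ∀ j ω, B j ω = Y (j - 1) j ω - Y (j - 1) (j - 1) ω
        - ((J : ℝ) - (j : ℝ))⁻¹ * ∑ l ∈ Icc j (J - 1), (Y l j ω - Y l (j - 1) ω))
    -- the non-parametric within-period estimator with deterministic weights v
    (v : ℕ → ℝ) (βNPWP : Ω → ℝ)
    (hNPWP : ∀ ω, βNPWP ω = ∑ j ∈ Icc 2 (J - 1), v j * A j ω)
    -- the crossover estimator with deterministic weights w
    (w : ℕ → ℝ) (βCO : Ω → ℝ)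
    (hCO : ∀ ω, βCO ω = ∑ j ∈ Icc 2 (J - 1), w j * B j ω)
    -- homoskedastic errors
    (σ2 : ℝ) (hσ : ∀ i ∈ Icc 1 (J - 1), ∀ j ∈ Icc 1 J, σsq i j = σ2)
    :
    variance βNPWP ℙ
        = (τsq + σ2) * ∑ j ∈ Icc 2 (J - 1), (v j) ^ 2 *
              (((j : ℝ) - 1)⁻¹ + ((J : ℝ) - (j : ℝ))⁻¹)
          + 2 * τsq * ∑ j ∈ Icc 2 (J - 2), ∑ k ∈ Icc (j + 1) (J - 1),
              v j * v k * ((J : ℝ) - 1) / (((J : ℝ) - (j : ℝ)) * ((k : ℝ) - 1))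
      ∧ variance βCO ℙ
        = 2 * σ2 * ∑ j ∈ Icc 2 (J - 1), (w j) ^ 2 * (1 + ((J : ℝ) - (j : ℝ))⁻¹)
      ∧ covar βNPWP βCO
        = σ2 * ∑ j ∈ Icc 2 (J - 1), v j * w j *
            (((j : ℝ) - 1)⁻¹ + ((J : ℝ) - (j : ℝ))⁻¹) :=
  stmt_16_general J μc β τsq θ σsq α ε hindep hVα hL2α hVε hL2ε Y hY A hA B hB v βNPWP hNPWP w βCO
    hCO σ2 hσ
end

section
/- In Setting (B) with homoskedastic errors σ²_{i,j} = σ² > 0 for all i, j, suppose the deterministic weights v_j, w_j (j = 2,...,J−1) are nonnegative with Σ_j v_j = Σ_j w_j = 1, w_j > 0 for all j, and v_j ≤ 2·w_j for all j. Then Cov(β̂^NPWP, β̂^CO) < Var(β̂^CO). -/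
open MeasureTheory ProbabilityTheory Finset

lemma covar_linear {Ω : Type*} [MeasureSpace Ω] [IsProbabilityMeasure (ℙ : Measure Ω)]
    {T : Type*} (s : Finset T) (X : T → Ω → ℝ)
    (hL2 : ∀ t ∈ s, MemLp (X t) 2 ℙ)
    (hmean : ∀ t ∈ s, ∫ ω, X t ω = 0)
    (hind : ∀ t ∈ s, ∀ t' ∈ s, t ≠ t' → IndepFun (X t) (X t') ℙ)
    (a b : T → ℝ) (c1 c2 : ℝ) (f g : Ω → ℝ)
    (hf : ∀ ω, f ω = c1 + ∑ t ∈ s, a t * X t ω)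
    (hg : ∀ ω, g ω = c2 + ∑ t ∈ s, b t * X t ω) :
    covar f g = ∑ t ∈ s, a t * b t * variance (X t) ℙ := by
  classical
  have hint : ∀ t ∈ s, Integrable (X t) ℙ := fun t ht => (hL2 t ht).integrable one_le_two
  have hmul : ∀ t ∈ s, ∀ t' ∈ s, Integrable (fun ω => X t ω * X t' ω) ℙ := by
    intro t ht t' ht'
    by_cases h : t = t'
    · subst h; simpa [pow_two] using (hL2 t ht).integrable_sq
    · exact (hind t ht t' ht' h).integrable_mul (hint t ht) (hint t' ht')
  have hIf : (∫ ω, f ω) = c1 := by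
    have : f = fun ω => c1 + ∑ t ∈ s, a t * X t ω := funext hf
    rw [this, integral_add (integrable_const _) (integrable_finset_sum _
      fun t ht => (hint t ht).const_mul _), integral_finset_sum _
      fun t ht => (hint t ht).const_mul _]
    simp only [integral_const_mul]
    rw [Finset.sum_eq_zero fun t ht => by rw [hmean t ht, mul_zero]]
    simp
  have hIg : (∫ ω, g ω) = c2 := by
    have : g = fun ω => c2 + ∑ t ∈ s, b t * X t ω := funext hg
    rw [this, integral_add (integrable_const _) (integrable_finset_sum _
      fun t ht => (hint t ht).const_mul _), integral_finset_sum _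
      fun t ht => (hint t ht).const_mul _]
    simp only [integral_const_mul]
    rw [Finset.sum_eq_zero fun t ht => by rw [hmean t ht, mul_zero]]
    simp
  have key : ∀ t ∈ s, ∀ t' ∈ s,
      (∫ ω, X t ω * X t' ω) = if t = t' then variance (X t) ℙ else 0 := by
    intro t ht t' ht'
    by_cases h : t = t'
    · subst h
      simp only [if_pos rfl]
      rw [variance_eq_sub (hL2 t ht), hmean t ht]
      simp [pow_two]
    · rw [if_neg h]
      have := (hind t ht t' ht' h).integral_mul_eq_mul_integral (hint t ht).aestronglyMeasurable (hint t' ht').aestronglyMeasurable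
      rw [hmean t ht, hmean t' ht', mul_zero] at this
      calc ∫ ω, X t ω * X t' ω = integral ℙ (X t * X t') := by rfl
        _ = 0 := this
  unfold covar
  rw [hIf, hIg]
  have hexp : ∀ ω, (f ω - c1) * (g ω - c2)
      = ∑ t ∈ s, ∑ t' ∈ s, (a t * b t') * (X t ω * X t' ω) := by
    intro ω
    rw [hf ω, hg ω]
    ring_nf
    rw [Finset.sum_mul_sum]
    exact Finset.sum_congr rfl fun t _ => Finset.sum_congr rfl fun t' _ => by ring
  calc (∫ ω, (f ω - c1) * (g ω - c2))
      = ∫ ω, ∑ t ∈ s, ∑ t' ∈ s, (a t * b t') * (X t ω * X t' ω) := by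
        exact integral_congr_ae (Filter.Eventually.of_forall hexp)
    _ = ∑ t ∈ s, ∑ t' ∈ s, (a t * b t') * ∫ ω, X t ω * X t' ω := by
        rw [integral_finset_sum _ fun t ht => integrable_finset_sum _
          fun t' ht' => ((hmul t ht t' ht').const_mul _)]
        exact Finset.sum_congr rfl fun t ht => by
          rw [integral_finset_sum _ fun t' ht' => ((hmul t ht t' ht').const_mul _)]
          exact Finset.sum_congr rfl fun t' ht' => integral_const_mul _ _
    _ = ∑ t ∈ s, a t * b t * variance (X t) ℙ := by
        refine Finset.sum_congr rfl fun t ht => ?_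
        rw [Finset.sum_eq_single t (fun t' ht' h => by rw [key t ht t' ht', if_neg (Ne.symm h), mul_zero])
          (fun h => absurd ht h)]
        rw [key t ht t ht, if_pos rfl]


noncomputable def fcoef (J j i : ℕ) : ℝ :=
  if i ≤ j - 1 then ((j : ℝ) - 1)⁻¹ else -(((J : ℝ) - (j : ℝ))⁻¹)

noncomputable def gcoef (J k i : ℕ) : ℝ :=
  if i = k - 1 then 1 else if k ≤ i then -(((J : ℝ) - (k : ℝ))⁻¹) else 0

noncomputable def dcoef (k m : ℕ) : ℝ :=
  (if m = k then 1 else 0) - (if m = k - 1 then 1 else 0)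

noncomputable def acoef (J j : ℕ) : ℕ ⊕ ℕ × ℕ → ℝ :=
  Sum.elim (fun i => fcoef J j i) (fun p => (if p.2 = j then 1 else 0) * fcoef J j p.1)

noncomputable def bcoef (J k : ℕ) : ℕ ⊕ ℕ × ℕ → ℝ :=
  Sum.elim (fun _ => 0) (fun p => dcoef k p.2 * gcoef J k p.1)

lemma sum_Icc_split (f : ℕ → ℝ) {a b c : ℕ} (hab : a ≤ b + 1) (hbc : b ≤ c) :
    ∑ i ∈ Icc a c, f i = ∑ i ∈ Icc a b, f i + ∑ i ∈ Icc (b+1) c, f i := by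
  rw [← Finset.sum_union]
  · congr 1; ext i; simp only [Finset.mem_Icc, Finset.mem_union]; omega
  · rw [Finset.disjoint_left]; intro i hi hi'
    simp only [Finset.mem_Icc] at hi hi'; omega

lemma sum_const_card (a b : ℕ) (e : ℝ) :
    ∑ _i ∈ Icc a b, e = ((b + 1 - a : ℕ) : ℝ) * e := by
  rw [Finset.sum_const, Nat.card_Icc, nsmul_eq_mul]

lemma cast_Jsubj {J j : ℕ} (hjJ : j ≤ J - 1) (hJ : 1 ≤ J) :
    ((J - 1 + 1 - j : ℕ) : ℝ) = (J : ℝ) - (j : ℝ) := by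
  rw [show J - 1 + 1 - j = J - j from by omega, Nat.cast_sub (by omega)]

lemma JsubjR_pos {J j : ℕ} (hjJ : j ≤ J - 1) (hJ : 1 ≤ J) :
    0 < (J : ℝ) - (j : ℝ) := by
  have h : (j : ℝ) + 1 ≤ (J : ℝ) := by exact_mod_cast (by omega : j + 1 ≤ J)
  linarith

lemma jsub1R_pos {j : ℕ} (hj : 2 ≤ j) : 0 < (j : ℝ) - 1 := by
  have : (2 : ℝ) ≤ (j : ℝ) := by exact_mod_cast hj
  linarith

lemma sum_fcoef_mul {J j : ℕ} (hj2 : 2 ≤ j) (hjJ : j ≤ J - 1) (hJ : 1 ≤ J) (h : ℕ → ℝ) :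
    ∑ i ∈ Icc 1 (J-1), fcoef J j i * h i
      = ((j : ℝ) - 1)⁻¹ * ∑ i ∈ Icc 1 (j-1), h i
        - ((J : ℝ) - (j : ℝ))⁻¹ * ∑ i ∈ Icc j (J-1), h i := by
  have hsplit := sum_Icc_split (fun i => fcoef J j i * h i)
    (a := 1) (b := j - 1) (c := J - 1) (by omega) (by omega)
  rw [show j - 1 + 1 = j from by omega] at hsplit
  rw [hsplit]
  have h1 : ∑ i ∈ Icc 1 (j-1), fcoef J j i * h i
      = ∑ i ∈ Icc 1 (j-1), ((j : ℝ) - 1)⁻¹ * h i := by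
    refine Finset.sum_congr rfl fun i hi => ?_
    rw [Finset.mem_Icc] at hi
    rw [fcoef, if_pos hi.2]
  have h2 : ∑ i ∈ Icc j (J-1), fcoef J j i * h i
      = ∑ i ∈ Icc j (J-1), -(((J : ℝ) - (j : ℝ))⁻¹) * h i := by
    refine Finset.sum_congr rfl fun i hi => ?_
    rw [Finset.mem_Icc] at hi
    rw [fcoef, if_neg (by omega)]
  rw [h1, h2, ← Finset.mul_sum, ← Finset.mul_sum]
  ring

lemma sum_gcoef_mul {J k : ℕ} (hk2 : 2 ≤ k) (hkJ : k ≤ J - 1) (hJ : 1 ≤ J) (h : ℕ → ℝ) :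
    ∑ i ∈ Icc 1 (J-1), gcoef J k i * h i
      = h (k-1) - ((J : ℝ) - (k : ℝ))⁻¹ * ∑ i ∈ Icc k (J-1), h i := by
  have hsplit := sum_Icc_split (fun i => gcoef J k i * h i)
    (a := 1) (b := k - 1) (c := J - 1) (by omega) (by omega)
  rw [show k - 1 + 1 = k from by omega] at hsplit
  rw [hsplit]
  have h1 : ∑ i ∈ Icc 1 (k-1), gcoef J k i * h i = h (k-1) := by
    rw [Finset.sum_eq_single_of_mem (k-1) (Finset.mem_Icc.mpr ⟨by omega, le_refl _⟩)]
    · rw [gcoef, if_pos rfl, one_mul]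
    · intro i hi hne
      rw [Finset.mem_Icc] at hi
      rw [gcoef, if_neg hne, if_neg (by omega), zero_mul]
  have h2 : ∑ i ∈ Icc k (J-1), gcoef J k i * h i
      = ∑ i ∈ Icc k (J-1), -(((J : ℝ) - (k : ℝ))⁻¹) * h i := by
    refine Finset.sum_congr rfl fun i hi => ?_
    rw [Finset.mem_Icc] at hi
    rw [gcoef, if_neg (by omega), if_pos (by omega)]
  rw [h1, h2, ← Finset.mul_sum]
  ring

lemma sum_fcoef_const {J j c : ℕ} (hj2 : 2 ≤ j) (hjc : j ≤ c) (hcJ : c ≤ J - 1) (hJ : 1 ≤ J) :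
    ∑ i ∈ Icc c (J-1), fcoef J j i = ((J : ℝ) - (c : ℝ)) * (-(((J : ℝ) - (j : ℝ))⁻¹)) := by
  rw [Finset.sum_congr rfl (fun i hi => ?_), sum_const_card, cast_Jsubj hcJ hJ]
  rw [Finset.mem_Icc] at hi
  rw [fcoef, if_neg (by omega)]

lemma sum_gcoef_const {J k c : ℕ} (hk2 : 2 ≤ k) (hkc : k ≤ c) (hcJ : c ≤ J - 1) (hJ : 1 ≤ J) :
    ∑ i ∈ Icc c (J-1), gcoef J k i = ((J : ℝ) - (c : ℝ)) * (-(((J : ℝ) - (k : ℝ))⁻¹)) := by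
  rw [Finset.sum_congr rfl (fun i hi => ?_), sum_const_card, cast_Jsubj hcJ hJ]
  rw [Finset.mem_Icc] at hi
  rw [gcoef, if_neg (by omega), if_pos (by omega)]

lemma sum_fg_diag {J j : ℕ} (hj2 : 2 ≤ j) (hjJ : j ≤ J - 1) (hJ : 1 ≤ J) :
    ∑ i ∈ Icc 1 (J-1), fcoef J j i * gcoef J j i
      = ((j : ℝ) - 1)⁻¹ + ((J : ℝ) - (j : ℝ))⁻¹ := by
  rw [Finset.sum_congr rfl (fun i _ => mul_comm (fcoef J j i) (gcoef J j i)),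
    sum_gcoef_mul hj2 hjJ hJ, sum_fcoef_const hj2 (le_refl j) hjJ hJ]
  have h1 : fcoef J j (j-1) = ((j : ℝ) - 1)⁻¹ := by rw [fcoef, if_pos (le_refl _)]
  have h2 : ((J : ℝ) - (j : ℝ)) ≠ 0 := (JsubjR_pos hjJ hJ).ne'
  rw [h1]
  field_simp
  ring

lemma sum_fg_off {J j k : ℕ} (hj2 : 2 ≤ j) (hjk : j < k) (hkJ : k ≤ J - 1) (hJ : 1 ≤ J) :
    ∑ i ∈ Icc 1 (J-1), fcoef J j i * gcoef J k i = 0 := by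
  rw [Finset.sum_congr rfl (fun i _ => mul_comm (fcoef J j i) (gcoef J k i)),
    sum_gcoef_mul (by omega) hkJ hJ, sum_fcoef_const hj2 (by omega) hkJ hJ]
  have h1 : fcoef J j (k-1) = -(((J : ℝ) - (j : ℝ))⁻¹) := by rw [fcoef, if_neg (by omega)]
  have h2 : ((J : ℝ) - (k : ℝ)) ≠ 0 := (JsubjR_pos hkJ hJ).ne'
  have h3 : ((J : ℝ) - (j : ℝ)) ≠ 0 := (JsubjR_pos (by omega) hJ).ne'
  rw [h1]
  field_simp
  ring

lemma sum_gg_diag {J j : ℕ} (hj2 : 2 ≤ j) (hjJ : j ≤ J - 1) (hJ : 1 ≤ J) :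
    ∑ i ∈ Icc 1 (J-1), gcoef J j i * gcoef J j i
      = 1 + ((J : ℝ) - (j : ℝ))⁻¹ := by
  rw [sum_gcoef_mul hj2 hjJ hJ, sum_gcoef_const hj2 (le_refl j) hjJ hJ]
  have h1 : gcoef J j (j-1) = 1 := by rw [gcoef, if_pos rfl]
  have h2 : ((J : ℝ) - (j : ℝ)) ≠ 0 := (JsubjR_pos hjJ hJ).ne'
  rw [h1]
  field_simp
  ring

lemma sum_gg_off {J j k : ℕ} (hj2 : 2 ≤ j) (hjk : j < k) (hkJ : k ≤ J - 1) (hJ : 1 ≤ J) :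
    ∑ i ∈ Icc 1 (J-1), gcoef J j i * gcoef J k i = 0 := by
  rw [Finset.sum_congr rfl (fun i _ => mul_comm (gcoef J j i) (gcoef J k i)),
    sum_gcoef_mul (by omega) hkJ hJ, sum_gcoef_const hj2 (by omega) hkJ hJ]
  have h1 : gcoef J j (k-1) = -(((J : ℝ) - (j : ℝ))⁻¹) := by
    rw [gcoef, if_neg (by omega), if_pos (by omega)]
  have h2 : ((J : ℝ) - (k : ℝ)) ≠ 0 := (JsubjR_pos hkJ hJ).ne'
  have h3 : ((J : ℝ) - (j : ℝ)) ≠ 0 := (JsubjR_pos (by omega) hJ).ne'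
  rw [h1]
  field_simp
  ring

lemma sum_delta {J c : ℕ} (hc1 : 1 ≤ c) (hcJ : c ≤ J) (h : ℕ → ℝ) :
    ∑ m ∈ Icc 1 J, (if m = c then (1:ℝ) else 0) * h m = h c := by
  rw [Finset.sum_congr rfl (fun m _ => ?_), Finset.sum_ite_eq' (Icc 1 J) c h,
    if_pos (Finset.mem_Icc.mpr ⟨hc1, hcJ⟩)]
  by_cases hm : m = c <;> simp [hm]

lemma sum_ind_dcoef {J j : ℕ} (hj1 : 1 ≤ j) (hjJ : j ≤ J) (k : ℕ) :
    ∑ m ∈ Icc 1 J, (if m = j then (1:ℝ) else 0) * dcoef k m = dcoef k j :=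
  sum_delta hj1 hjJ _

lemma sum_dd {J j : ℕ} (hj2 : 2 ≤ j) (hjJ : j ≤ J) (k : ℕ) :
    ∑ m ∈ Icc 1 J, dcoef j m * dcoef k m = dcoef k j - dcoef k (j-1) := by
  have : ∀ m, dcoef j m * dcoef k m
      = (if m = j then (1:ℝ) else 0) * dcoef k m
        - (if m = j - 1 then (1:ℝ) else 0) * dcoef k m := by
    intro m; rw [dcoef]; ring
  rw [Finset.sum_congr rfl (fun m _ => this m), Finset.sum_sub_distrib,
    sum_delta (by omega) hjJ, sum_delta (by omega) (by omega)]

lemma sum_weighted_bilinear {T : Type*} (s : Finset T) (S1 S2 : Finset ℕ)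
    (u w : ℕ → ℝ) (P Q : ℕ → T → ℝ) (V : T → ℝ) :
    ∑ t ∈ s, (∑ j ∈ S1, u j * P j t) * (∑ k ∈ S2, w k * Q k t) * V t
      = ∑ j ∈ S1, ∑ k ∈ S2, u j * w k * ∑ t ∈ s, P j t * Q k t * V t := by
  have h1 : ∀ t, (∑ j ∈ S1, u j * P j t) * (∑ k ∈ S2, w k * Q k t) * V t
      = ∑ j ∈ S1, ∑ k ∈ S2, u j * w k * (P j t * Q k t * V t) := by
    intro t
    rw [Finset.sum_mul_sum, Finset.sum_mul]
    refine Finset.sum_congr rfl fun j _ => ?_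
    rw [Finset.sum_mul]
    exact Finset.sum_congr rfl fun k _ => by ring
  rw [Finset.sum_congr rfl fun t _ => h1 t, Finset.sum_comm]
  refine Finset.sum_congr rfl fun j _ => ?_
  rw [Finset.sum_comm]
  refine Finset.sum_congr rfl fun k _ => ?_
  rw [Finset.mul_sum]

/-- **Covariance bound: `Cov(β̂^NPWP, β̂^CO) < Var(β̂^CO)`** under homoskedastic errors,
nonnegative weights summing to one, positive crossover weights, and `v_j ≤ 2 w_j`. -/
theorem stmt_17
    {Ω : Type*} [MeasureSpace Ω] [IsProbabilityMeasure (ℙ : Measure Ω)]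
    (J : ℕ) (hJ : 3 ≤ J)
    (μc β τsq : ℝ) (θ : ℕ → ℝ) (σsq : ℕ → ℕ → ℝ)
    (α : ℕ → Ω → ℝ) (ε : ℕ → ℕ → Ω → ℝ)
    (hmα : ∀ i, Measurable (α i)) (hmε : ∀ i j, Measurable (ε i j))
    -- the random variables {α_i} ∪ {ε_{i,j}} are mutually independent
    (hindep : iIndepFun
      (fun x : {x : ℕ ⊕ ℕ × ℕ // (∀ i, x = Sum.inl i → i ∈ Icc 1 (J - 1)) ∧
          (∀ i j, x = Sum.inr (i, j) → i ∈ Icc 1 (J - 1) ∧ j ∈ Icc 1 J)} =>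
        Sum.elim α (fun q => ε q.1 q.2) x.1) ℙ)
    -- moment assumptions
    (hEα : ∀ i ∈ Icc 1 (J - 1), ∫ ω, α i ω ∂ℙ = 0)
    (hVα : ∀ i ∈ Icc 1 (J - 1), variance (α i) ℙ = τsq)
    (hL2α : ∀ i ∈ Icc 1 (J - 1), MemLp (α i) 2 ℙ)
    (hEε : ∀ i ∈ Icc 1 (J - 1), ∀ j ∈ Icc 1 J, ∫ ω, ε i j ω ∂ℙ = 0)
    (hVε : ∀ i ∈ Icc 1 (J - 1), ∀ j ∈ Icc 1 J, variance (ε i j) ℙ = σsq i j)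
    (hL2ε : ∀ i ∈ Icc 1 (J - 1), ∀ j ∈ Icc 1 J, MemLp (ε i j) 2 ℙ)
    -- the mixed effects model: cluster i is on intervention in periods j > i
    (Y : ℕ → ℕ → Ω → ℝ)
    (hY : ∀ i j ω, Y i j ω = μc + α i ω + θ j + (if i < j then β else 0) + ε i j ω)
    -- the within-period contrast A_j
    (A : ℕ → Ω → ℝ)
    (hA : ∀ j ω, A j ω = ((j : ℝ) - 1)⁻¹ * ∑ i ∈ Icc 1 (j - 1), Y i j ω
        - ((J : ℝ) - (j : ℝ))⁻¹ * ∑ i ∈ Icc j (J - 1), Y i j ω)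
    -- the crossover contrast B_j
    (B : ℕ → Ω → ℝ)
    (hB : ∀ j ω, B j ω = Y (j - 1) j ω - Y (j - 1) (j - 1) ω
        - ((J : ℝ) - (j : ℝ))⁻¹ * ∑ l ∈ Icc j (J - 1), (Y l j ω - Y l (j - 1) ω))
    -- the non-parametric within-period estimator with deterministic weights v
    (v : ℕ → ℝ) (βNPWP : Ω → ℝ)
    (hNPWP : ∀ ω, βNPWP ω = ∑ j ∈ Icc 2 (J - 1), v j * A j ω)
    -- the crossover estimator with deterministic weights w
    (w : ℕ → ℝ) (βCO : Ω → ℝ)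
    (hCO : ∀ ω, βCO ω = ∑ j ∈ Icc 2 (J - 1), w j * B j ω)
    -- homoskedastic errors
    (σ2 : ℝ) (hσ : ∀ i ∈ Icc 1 (J - 1), ∀ j ∈ Icc 1 J, σsq i j = σ2)
    -- weight assumptions
    (hσ2pos : 0 < σ2)
    (hv0 : ∀ j ∈ Icc 2 (J - 1), 0 ≤ v j) (hw0 : ∀ j ∈ Icc 2 (J - 1), 0 < w j)
    (hvsum : ∑ j ∈ Icc 2 (J - 1), v j = 1) (hwsum : ∑ j ∈ Icc 2 (J - 1), w j = 1)
    (hvw : ∀ j ∈ Icc 2 (J - 1), v j ≤ 2 * w j)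
    :
    covar βNPWP βCO < variance βCO ℙ := by
  classical
  have hJ1 : 1 ≤ J := by omega
  -- notation
  set sP : Finset (ℕ × ℕ) := (Icc 1 (J-1)) ×ˢ (Icc 1 J) with hsPdef
  set sS : Finset (ℕ ⊕ ℕ × ℕ) := (Icc 1 (J-1)).disjSum sP with hsSdef
  set X : ℕ ⊕ ℕ × ℕ → Ω → ℝ := Sum.elim α (fun q => ε q.1 q.2) with hXdef
  -- membership facts
  have mkP : ∀ t ∈ sS, (∀ i, t = Sum.inl i → i ∈ Icc 1 (J - 1)) ∧
      (∀ i j, t = Sum.inr (i, j) → i ∈ Icc 1 (J - 1) ∧ j ∈ Icc 1 J) := by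
    intro t ht
    rcases Finset.mem_disjSum.mp ht with ⟨i, hi, rfl⟩ | ⟨p, hp, rfl⟩
    · refine ⟨fun i' h => ?_, fun i' j' h => (by cases h)⟩
      rw [Sum.inl.injEq] at h; exact h ▸ hi
    · obtain ⟨hp1, hp2⟩ := Finset.mem_product.mp hp
      refine ⟨fun i' h => (by cases h), fun i' j' h => ?_⟩
      rw [Sum.inr.injEq] at h
      subst h
      exact ⟨hp1, hp2⟩
  have hL2X : ∀ t ∈ sS, MemLp (X t) 2 ℙ := by
    intro t ht
    rcases Finset.mem_disjSum.mp ht with ⟨i, hi, rfl⟩ | ⟨p, hp, rfl⟩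
    · exact hL2α i hi
    · obtain ⟨hp1, hp2⟩ := Finset.mem_product.mp hp
      exact hL2ε p.1 hp1 p.2 hp2
  have hmeanX : ∀ t ∈ sS, ∫ ω, X t ω = 0 := by
    intro t ht
    rcases Finset.mem_disjSum.mp ht with ⟨i, hi, rfl⟩ | ⟨p, hp, rfl⟩
    · exact hEα i hi
    · obtain ⟨hp1, hp2⟩ := Finset.mem_product.mp hp
      exact hEε p.1 hp1 p.2 hp2
  have hindX : ∀ t ∈ sS, ∀ t' ∈ sS, t ≠ t' → IndepFun (X t) (X t') ℙ := by
    intro t ht t' ht' hne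
    exact hindep.indepFun (i := ⟨t, mkP t ht⟩) (j := ⟨t', mkP t' ht'⟩)
      (fun hEq => hne (congrArg Subtype.val hEq))
  have hVXP : ∀ p ∈ sP, variance (X (Sum.inr p)) ℙ = σ2 := by
    intro p hp
    obtain ⟨hp1, hp2⟩ := Finset.mem_product.mp hp
    show variance (ε p.1 p.2) ℙ = σ2
    rw [hVε p.1 hp1 p.2 hp2, hσ p.1 hp1 p.2 hp2]

  have repA : ∀ j ∈ Icc 2 (J-1), ∀ ω, A j ω = β + ∑ t ∈ sS, acoef J j t * X t ω := by
    intro j hj ω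
    obtain ⟨hj2, hjJ⟩ := Finset.mem_Icc.mp hj
    have hc1 : ((j:ℝ) - 1) ≠ 0 := (jsub1R_pos hj2).ne'
    have hc2 : ((J:ℝ) - (j:ℝ)) ≠ 0 := (JsubjR_pos hjJ hJ1).ne'
    have hRHS : ∑ t ∈ sS, acoef J j t * X t ω
        = ∑ i ∈ Icc 1 (J-1), fcoef J j i * (α i ω + ε i j ω) := by
      rw [hsSdef, Finset.sum_disjSum]
      have h2 : ∑ p ∈ sP, acoef J j (Sum.inr p) * X (Sum.inr p) ω
          = ∑ i ∈ Icc 1 (J-1), fcoef J j i * ε i j ω := by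
        rw [hsPdef, Finset.sum_product]
        refine Finset.sum_congr rfl fun i _ => ?_
        have hstep : ∀ m ∈ Icc 1 J, acoef J j (Sum.inr (i, m)) * X (Sum.inr (i, m)) ω
            = if m = j then fcoef J j i * ε i m ω else 0 := by
          intro m _
          show ((if m = j then (1:ℝ) else 0) * fcoef J j i) * ε i m ω = _
          by_cases h : m = j <;> simp [h]
        rw [Finset.sum_congr rfl hstep,
          Finset.sum_ite_eq' (Icc 1 J) j (fun m => fcoef J j i * ε i m ω),
          if_pos (Finset.mem_Icc.mpr ⟨by omega, by omega⟩)]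
      have h1 : ∑ i ∈ Icc 1 (J-1), acoef J j (Sum.inl i) * X (Sum.inl i) ω
          = ∑ i ∈ Icc 1 (J-1), fcoef J j i * α i ω := rfl
      rw [h1, h2, ← Finset.sum_add_distrib]
      exact Finset.sum_congr rfl fun i _ => by ring
    have e1 : ∀ i ∈ Icc 1 (j-1), Y i j ω = (μc + θ j + β) + (α i ω + ε i j ω) := by
      intro i hi
      rw [Finset.mem_Icc] at hi
      rw [hY, if_pos (by omega)]
      ring
    have e2 : ∀ i ∈ Icc j (J-1), Y i j ω = (μc + θ j) + (α i ω + ε i j ω) := by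
      intro i hi
      rw [Finset.mem_Icc] at hi
      rw [hY, if_neg (by omega)]
      ring
    have key := sum_fcoef_mul hj2 hjJ hJ1 (fun i => α i ω + ε i j ω)
    beta_reduce at key
    have hcast1 : ((j - 1 + 1 - 1 : ℕ) : ℝ) = (j:ℝ) - 1 := by
      rw [show j - 1 + 1 - 1 = j - 1 from by omega, Nat.cast_sub (by omega)]
      norm_num
    have hcast2 : ((J - 1 + 1 - j : ℕ) : ℝ) = (J:ℝ) - (j:ℝ) := cast_Jsubj hjJ hJ1
    have S1 : ∑ i ∈ Icc 1 (j-1), Y i j ω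
        = ((j:ℝ) - 1) * (μc + θ j + β) + ∑ i ∈ Icc 1 (j-1), (α i ω + ε i j ω) := by
      rw [Finset.sum_congr rfl e1, Finset.sum_add_distrib, sum_const_card, hcast1]
    have S2 : ∑ i ∈ Icc j (J-1), Y i j ω
        = ((J:ℝ) - (j:ℝ)) * (μc + θ j) + ∑ i ∈ Icc j (J-1), (α i ω + ε i j ω) := by
      rw [Finset.sum_congr rfl e2, Finset.sum_add_distrib, sum_const_card, hcast2]
    rw [hA, S1, S2, hRHS, key]
    field_simp
    ring
  have repB : ∀ k ∈ Icc 2 (J-1), ∀ ω, B k ω = β + ∑ t ∈ sS, bcoef J k t * X t ω := by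
    intro k hk ω
    obtain ⟨hk2, hkJ⟩ := Finset.mem_Icc.mp hk
    have hc2 : ((J:ℝ) - (k:ℝ)) ≠ 0 := (JsubjR_pos hkJ hJ1).ne'
    have hRHS : ∑ t ∈ sS, bcoef J k t * X t ω
        = ∑ i ∈ Icc 1 (J-1), gcoef J k i * (ε i k ω - ε i (k-1) ω) := by
      rw [hsSdef, Finset.sum_disjSum]
      have h1 : ∑ i ∈ Icc 1 (J-1), bcoef J k (Sum.inl i) * X (Sum.inl i) ω = 0 :=
        Finset.sum_eq_zero fun i _ => by
          show (0:ℝ) * _ = 0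
          ring
      have h2 : ∑ p ∈ sP, bcoef J k (Sum.inr p) * X (Sum.inr p) ω
          = ∑ i ∈ Icc 1 (J-1), gcoef J k i * (ε i k ω - ε i (k-1) ω) := by
        rw [hsPdef, Finset.sum_product]
        refine Finset.sum_congr rfl fun i _ => ?_
        have hstep : ∀ m ∈ Icc 1 J, bcoef J k (Sum.inr (i, m)) * X (Sum.inr (i, m)) ω
            = (if m = k then (1:ℝ) else 0) * (gcoef J k i * ε i m ω)
              - (if m = k - 1 then (1:ℝ) else 0) * (gcoef J k i * ε i m ω) := by
          intro m _
          show (dcoef k m * gcoef J k i) * ε i m ω = _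
          rw [dcoef]
          ring
        rw [Finset.sum_congr rfl hstep, Finset.sum_sub_distrib,
          sum_delta (by omega) (by omega) (fun m => gcoef J k i * ε i m ω),
          sum_delta (by omega) (by omega) (fun m => gcoef J k i * ε i m ω)]
        ring
      rw [h1, h2, zero_add]
    have key := sum_gcoef_mul hk2 hkJ hJ1 (fun i => ε i k ω - ε i (k-1) ω)
    beta_reduce at key
    have e1 : ∀ l ∈ Icc k (J-1), Y l k ω - Y l (k-1) ω
        = (θ k - θ (k-1)) + (ε l k ω - ε l (k-1) ω) := by
      intro l hl
      rw [Finset.mem_Icc] at hl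
      rw [hY, hY, if_neg (by omega), if_neg (by omega)]
      ring
    rw [hRHS, key, hB, Finset.sum_congr rfl e1, Finset.sum_add_distrib, sum_const_card,
      cast_Jsubj hkJ hJ1, hY (k-1) k ω, hY (k-1) (k-1) ω,
      if_pos (by omega : k - 1 < k), if_neg (by omega : ¬ (k - 1 < k - 1))]
    field_simp
    ring
  have repN : ∀ ω, βNPWP ω
      = β + ∑ t ∈ sS, (∑ j ∈ Icc 2 (J-1), v j * acoef J j t) * X t ω := by
    intro ω
    rw [hNPWP, Finset.sum_congr rfl (fun j hj => by rw [repA j hj ω]),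
      Finset.sum_congr rfl (fun j _ => mul_add (v j) β _), Finset.sum_add_distrib,
      ← Finset.sum_mul, hvsum, one_mul]
    congr 1
    rw [Finset.sum_congr rfl (fun j _ => Finset.mul_sum _ _ _), Finset.sum_comm]
    refine Finset.sum_congr rfl fun t _ => ?_
    rw [Finset.sum_mul]
    exact Finset.sum_congr rfl fun j _ => (mul_assoc _ _ _).symm
  have repCO : ∀ ω, βCO ω
      = β + ∑ t ∈ sS, (∑ k ∈ Icc 2 (J-1), w k * bcoef J k t) * X t ω := by
    intro ω
    rw [hCO, Finset.sum_congr rfl (fun k hk => by rw [repB k hk ω]),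
      Finset.sum_congr rfl (fun k _ => mul_add (w k) β _), Finset.sum_add_distrib,
      ← Finset.sum_mul, hwsum, one_mul]
    congr 1
    rw [Finset.sum_congr rfl (fun k _ => Finset.mul_sum _ _ _), Finset.sum_comm]
    refine Finset.sum_congr rfl fun t _ => ?_
    rw [Finset.sum_mul]
    exact Finset.sum_congr rfl fun k _ => (mul_assoc _ _ _).symm
  have covN : covar βNPWP βCO
      = ∑ t ∈ sS, (∑ j ∈ Icc 2 (J-1), v j * acoef J j t)
          * (∑ k ∈ Icc 2 (J-1), w k * bcoef J k t) * variance (X t) ℙ := by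
    have h := covar_linear sS X hL2X hmeanX hindX
      (fun t => ∑ j ∈ Icc 2 (J-1), v j * acoef J j t)
      (fun t => ∑ k ∈ Icc 2 (J-1), w k * bcoef J k t) β β βNPWP βCO repN repCO
    simpa using h
  have covC : covar βCO βCO
      = ∑ t ∈ sS, (∑ k ∈ Icc 2 (J-1), w k * bcoef J k t)
          * (∑ k ∈ Icc 2 (J-1), w k * bcoef J k t) * variance (X t) ℙ := by
    have h := covar_linear sS X hL2X hmeanX hindX
      (fun t => ∑ k ∈ Icc 2 (J-1), w k * bcoef J k t)
      (fun t => ∑ k ∈ Icc 2 (J-1), w k * bcoef J k t) β β βCO βCO repCO repCO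
    simpa using h
  have hMem2 : MemLp βCO 2 ℙ := by
    have hfe : βCO = fun ω => β + ∑ t ∈ sS, (∑ k ∈ Icc 2 (J-1), w k * bcoef J k t) * X t ω :=
      funext repCO
    rw [hfe]
    exact (memLp_const β).add (memLp_finsetSum _ (fun t ht => ((hL2X t ht).const_mul _)))
  have hvar : variance βCO ℙ = covar βCO βCO := by
    rw [variance_eq_integral hMem2.aemeasurable]
    refine integral_congr_ae (Filter.Eventually.of_forall fun ω => ?_)
    simp only [Pi.pow_apply, Pi.sub_apply]
    ring
  have Kab : ∀ j ∈ Icc 2 (J-1), ∀ k ∈ Icc 2 (J-1),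
      ∑ t ∈ sS, acoef J j t * bcoef J k t * variance (X t) ℙ
      = if j = k then σ2 * (((j:ℝ) - 1)⁻¹ + ((J:ℝ) - (j:ℝ))⁻¹) else 0 := by
    intro j hj k hk
    obtain ⟨hj2, hjJ⟩ := Finset.mem_Icc.mp hj
    obtain ⟨hk2, hkJ⟩ := Finset.mem_Icc.mp hk
    rw [hsSdef, Finset.sum_disjSum]
    have h1 : ∑ i ∈ Icc 1 (J-1),
        acoef J j (Sum.inl i) * bcoef J k (Sum.inl i) * variance (X (Sum.inl i)) ℙ = 0 :=
      Finset.sum_eq_zero fun i _ => by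
        show acoef J j (Sum.inl i) * 0 * _ = 0
        ring
    have h2 : ∑ p ∈ sP,
        acoef J j (Sum.inr p) * bcoef J k (Sum.inr p) * variance (X (Sum.inr p)) ℙ
        = (∑ i ∈ Icc 1 (J-1), fcoef J j i * gcoef J k i) * dcoef k j * σ2 := by
      have hstep : ∀ p ∈ sP,
          acoef J j (Sum.inr p) * bcoef J k (Sum.inr p) * variance (X (Sum.inr p)) ℙ
          = (fcoef J j p.1 * gcoef J k p.1 * σ2) * ((if p.2 = j then (1:ℝ) else 0) * dcoef k p.2) := by
        intro p hp
        rw [hVXP p hp]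
        show ((if p.2 = j then (1:ℝ) else 0) * fcoef J j p.1) * (dcoef k p.2 * gcoef J k p.1) * σ2 = _
        ring
      rw [Finset.sum_congr rfl hstep, hsPdef, Finset.sum_product]
      have hinner : ∀ i ∈ Icc 1 (J-1),
          ∑ m ∈ Icc 1 J, (fcoef J j i * gcoef J k i * σ2) * ((if m = j then (1:ℝ) else 0) * dcoef k m)
          = fcoef J j i * gcoef J k i * σ2 * dcoef k j := by
        intro i _
        rw [← Finset.mul_sum, sum_ind_dcoef (by omega) (by omega) k]
      rw [Finset.sum_congr rfl hinner, ← Finset.sum_mul, ← Finset.sum_mul]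
      ring
    rw [h1, h2, zero_add]
    by_cases hjk : j = k
    · subst hjk
      rw [if_pos rfl, sum_fg_diag hj2 hjJ hJ1]
      have hd : dcoef j j = 1 := by
        rw [dcoef, if_pos rfl, if_neg (by omega)]
        norm_num
      rw [hd]
      ring
    · rw [if_neg hjk]
      by_cases hjk1 : j = k - 1
      · have hd : dcoef k j = -1 := by
          rw [dcoef, if_neg hjk, if_pos hjk1]
          norm_num
        rw [hd, sum_fg_off hj2 (by omega) hkJ hJ1]
        ring
      · have hd : dcoef k j = 0 := by
          rw [dcoef, if_neg hjk, if_neg hjk1]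
          norm_num
        rw [hd]
        ring
  have Kbb : ∀ j ∈ Icc 2 (J-1), ∀ k ∈ Icc 2 (J-1),
      ∑ t ∈ sS, bcoef J j t * bcoef J k t * variance (X t) ℙ
      = if j = k then σ2 * (2 + 2 * ((J:ℝ) - (j:ℝ))⁻¹) else 0 := by
    intro j hj k hk
    obtain ⟨hj2, hjJ⟩ := Finset.mem_Icc.mp hj
    obtain ⟨hk2, hkJ⟩ := Finset.mem_Icc.mp hk
    rw [hsSdef, Finset.sum_disjSum]
    have h1 : ∑ i ∈ Icc 1 (J-1),
        bcoef J j (Sum.inl i) * bcoef J k (Sum.inl i) * variance (X (Sum.inl i)) ℙ = 0 :=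
      Finset.sum_eq_zero fun i _ => by
        show (0:ℝ) * _ * _ = 0
        ring
    have h2 : ∑ p ∈ sP,
        bcoef J j (Sum.inr p) * bcoef J k (Sum.inr p) * variance (X (Sum.inr p)) ℙ
        = (∑ i ∈ Icc 1 (J-1), gcoef J j i * gcoef J k i) * (dcoef k j - dcoef k (j-1)) * σ2 := by
      have hstep : ∀ p ∈ sP,
          bcoef J j (Sum.inr p) * bcoef J k (Sum.inr p) * variance (X (Sum.inr p)) ℙ
          = (gcoef J j p.1 * gcoef J k p.1 * σ2) * (dcoef j p.2 * dcoef k p.2) := by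
        intro p hp
        rw [hVXP p hp]
        show (dcoef j p.2 * gcoef J j p.1) * (dcoef k p.2 * gcoef J k p.1) * σ2 = _
        ring
      rw [Finset.sum_congr rfl hstep, hsPdef, Finset.sum_product]
      have hinner : ∀ i ∈ Icc 1 (J-1),
          ∑ m ∈ Icc 1 J, (gcoef J j i * gcoef J k i * σ2) * (dcoef j m * dcoef k m)
          = gcoef J j i * gcoef J k i * σ2 * (dcoef k j - dcoef k (j-1)) := by
        intro i _
        rw [← Finset.mul_sum, sum_dd hj2 (by omega) k]
      rw [Finset.sum_congr rfl hinner, ← Finset.sum_mul, ← Finset.sum_mul]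
      ring
    rw [h1, h2, zero_add]
    by_cases hjk : j = k
    · subst hjk
      rw [if_pos rfl, sum_gg_diag hj2 hjJ hJ1]
      have hd1 : dcoef j j = 1 := by
        rw [dcoef, if_pos rfl, if_neg (by omega)]
        norm_num
      have hd2 : dcoef j (j-1) = -1 := by
        rw [dcoef, if_neg (by omega), if_pos rfl]
        norm_num
      rw [hd1, hd2]
      ring
    · rw [if_neg hjk]
      rcases lt_or_gt_of_ne hjk with hlt | hgt
      · rw [sum_gg_off hj2 hlt hkJ hJ1]
        ring
      · have hz : ∑ i ∈ Icc 1 (J-1), gcoef J j i * gcoef J k i = 0 := by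
          rw [Finset.sum_congr rfl (fun i _ => mul_comm (gcoef J j i) (gcoef J k i)),
            sum_gg_off hk2 hgt hjJ hJ1]
        rw [hz]
        ring
  have covNval : covar βNPWP βCO
      = ∑ j ∈ Icc 2 (J-1), v j * w j * (σ2 * (((j:ℝ) - 1)⁻¹ + ((J:ℝ) - (j:ℝ))⁻¹)) := by
    rw [covN, sum_weighted_bilinear,
      Finset.sum_congr rfl (fun j hj => Finset.sum_congr rfl (fun k hk => by rw [Kab j hj k hk]))]
    refine Finset.sum_congr rfl fun j hj => ?_
    have hcoll : ∀ k ∈ Icc 2 (J-1),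
        v j * w k * (if j = k then σ2 * (((j:ℝ) - 1)⁻¹ + ((J:ℝ) - (j:ℝ))⁻¹) else 0)
        = if k = j then v j * w k * (σ2 * (((j:ℝ) - 1)⁻¹ + ((J:ℝ) - (j:ℝ))⁻¹)) else 0 := by
      intro k _
      rcases eq_or_ne j k with h | h
      · subst h
        simp
      · rw [if_neg h, if_neg (Ne.symm h), mul_zero]
    rw [Finset.sum_congr rfl hcoll, Finset.sum_ite_eq' (Icc 2 (J-1)) j _, if_pos hj]
  have covCval : covar βCO βCO
      = ∑ j ∈ Icc 2 (J-1), w j * w j * (σ2 * (2 + 2 * ((J:ℝ) - (j:ℝ))⁻¹)) := by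
    rw [covC, sum_weighted_bilinear,
      Finset.sum_congr rfl (fun j hj => Finset.sum_congr rfl (fun k hk => by rw [Kbb j hj k hk]))]
    refine Finset.sum_congr rfl fun j hj => ?_
    have hcoll : ∀ k ∈ Icc 2 (J-1),
        w j * w k * (if j = k then σ2 * (2 + 2 * ((J:ℝ) - (j:ℝ))⁻¹) else 0)
        = if k = j then w j * w k * (σ2 * (2 + 2 * ((J:ℝ) - (j:ℝ))⁻¹)) else 0 := by
      intro k _
      rcases eq_or_ne j k with h | h
      · subst h
        simp
      · rw [if_neg h, if_neg (Ne.symm h), mul_zero]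
    rw [Finset.sum_congr rfl hcoll, Finset.sum_ite_eq' (Icc 2 (J-1)) j _, if_pos hj]
  rw [covNval, hvar, covCval]
  have hex : ∃ j ∈ Icc 2 (J-1), v j < 2 * w j := by
    by_contra hcon
    push_neg at hcon
    have h2 : ∑ j ∈ Icc 2 (J-1), 2 * w j ≤ ∑ j ∈ Icc 2 (J-1), v j := Finset.sum_le_sum hcon
    rw [hvsum, ← Finset.mul_sum, hwsum, mul_one] at h2
    linarith
  refine Finset.sum_lt_sum ?_ ?_
  · intro j hj
    obtain ⟨hj2, hjJ⟩ := Finset.mem_Icc.mp hj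
    have h1 : (0:ℝ) < (j:ℝ) - 1 := jsub1R_pos hj2
    have h2 : (0:ℝ) < (J:ℝ) - (j:ℝ) := JsubjR_pos hjJ hJ1
    have h3 : ((j:ℝ) - 1)⁻¹ ≤ 1 := by
      have hge : (1:ℝ) ≤ (j:ℝ) - 1 := by
        have : (2:ℝ) ≤ (j:ℝ) := by exact_mod_cast hj2
        linarith
      rw [inv_le_one_iff₀]
      right
      exact hge
    have h4 : (0:ℝ) < ((j:ℝ) - 1)⁻¹ := inv_pos.mpr h1
    have h5 : (0:ℝ) < ((J:ℝ) - (j:ℝ))⁻¹ := inv_pos.mpr h2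
    have hwj : 0 < w j := hw0 j hj
    have hvj := hv0 j hj
    have hvwj := hvw j hj
    nlinarith [mul_pos hwj hσ2pos, mul_pos (mul_pos hwj hwj) hσ2pos,
      mul_nonneg (mul_nonneg (mul_pos hwj hwj).le hσ2pos.le) (sub_nonneg.mpr h3),
      mul_nonneg (mul_nonneg hwj.le hσ2pos.le) (add_pos h4 h5).le]
  · obtain ⟨j0, hj0, hj0lt⟩ := hex
    refine ⟨j0, hj0, ?_⟩
    obtain ⟨hj2, hjJ⟩ := Finset.mem_Icc.mp hj0
    have h1 : (0:ℝ) < (j0:ℝ) - 1 := jsub1R_pos hj2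
    have h2 : (0:ℝ) < (J:ℝ) - (j0:ℝ) := JsubjR_pos hjJ hJ1
    have h3 : ((j0:ℝ) - 1)⁻¹ ≤ 1 := by
      have hge : (1:ℝ) ≤ (j0:ℝ) - 1 := by
        have : (2:ℝ) ≤ (j0:ℝ) := by exact_mod_cast hj2
        linarith
      rw [inv_le_one_iff₀]
      right
      exact hge
    have h4 : (0:ℝ) < ((j0:ℝ) - 1)⁻¹ := inv_pos.mpr h1
    have h5 : (0:ℝ) < ((J:ℝ) - (j0:ℝ))⁻¹ := inv_pos.mpr h2
    have hwj : 0 < w j0 := hw0 j0 hj0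
    nlinarith [mul_pos hwj hσ2pos, mul_pos (mul_pos hwj hwj) hσ2pos,
      mul_nonneg (mul_nonneg (mul_pos hwj hwj).le hσ2pos.le) (sub_nonneg.mpr h3),
      mul_pos (mul_pos hwj hσ2pos) (add_pos h4 h5)]
end

section
/- In Setting (B) with homoskedastic errors σ²_{i,j} = σ² > 0 for all i, j, suppose the deterministic weights v_j, w_j (j = 2,...,J−1) are nonnegative with Σ_j v_j = Σ_j w_j = 1, w_j > 0 for all j, v_j ≤ 2·w_j for all j, and that τ² is such that Var(β̂^NPWP) = Var(β̂^CO). Then the ensemble estimator β̂^ENS = (1/2)·β̂^NPWP + (1/2)·β̂^CO satisfies Var(β̂^ENS) < Var(β̂^NPWP) = Var(β̂^CO), i.e. the ensemble estimator has strictly smaller variance than either single estimator. -/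
/-!
Write `N` and `C` for the two estimators. For square-integrable `N, C`,
`Var((N + C) / 2) = (Var N + Var C) / 2 - Var (N - C) / 4`, so under `Var N = Var C` it suffices
that `Var (N - C) > 0`. Every `A_j` involves only periods `≥ 2`, and so does every `B_j` with
`j ≥ 3`, while `B_2` contains `-ε_{1,1}`. Hence `N - C = w_2 ε_{1,1} + G` with `G` an affine
combination of the other random effects, all independent of `ε_{1,1}`, and
`Var (N - C) = w_2² σ² + Var G > 0`.
-/

open MeasureTheory ProbabilityTheory Finset

section General
variable {Ω ι : Type*} {mΩ : MeasurableSpace Ω} {μ : Measure Ω}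

lemma variance_half_add_half [IsFiniteMeasure μ] {X Y : Ω → ℝ} (hX : MemLp X 2 μ)
    (hY : MemLp Y 2 μ) :
    variance (fun ω => 1 / 2 * X ω + 1 / 2 * Y ω) μ
      = (variance X μ + variance Y μ) / 2 - variance (X - Y) μ / 4 := by
  have hXY : (fun ω => 1 / 2 * X ω + 1 / 2 * Y ω) = (1 / 2 : ℝ) • (X + Y) := by
    ext ω; simp only [Pi.smul_apply, Pi.add_apply, smul_eq_mul]; ring
  rw [hXY, variance_smul, variance_add hX hY, variance_sub hX hY]
  ring

def spanWithConst (Z : ι → Ω → ℝ) (T : Set ι) : Submodule ℝ (Ω → ℝ) :=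
  Submodule.span ℝ (insert 1 (Z '' T))

variable {Z : ι → Ω → ℝ} {T : Set ι} {f : Ω → ℝ}

lemma memLp_of_mem_spanWithConst [IsFiniteMeasure μ] (hZ : ∀ i ∈ T, MemLp (Z i) 2 μ)
    (hf : f ∈ spanWithConst Z T) : MemLp f 2 μ := by
  induction hf using Submodule.span_induction with
  | mem g hg =>
    obtain rfl | ⟨i, hi, rfl⟩ := hg
    · exact memLp_const 1
    · exact hZ i hi
  | zero => exact MemLp.zero
  | add g h _ _ hg hh => exact hg.add hh
  | smul c g _ hg => exact hg.const_smul c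

lemma measurable_of_mem_spanWithConst (hf : f ∈ spanWithConst Z T) :
    Measurable[⨆ i ∈ T, MeasurableSpace.comap (Z i) inferInstance] f := by
  induction hf using Submodule.span_induction with
  | mem g hg =>
    obtain rfl | ⟨i, hi, rfl⟩ := hg
    · exact measurable_const
    · exact Measurable.of_comap_le (le_iSup₂ (f := fun j (_ : j ∈ T) =>
        MeasurableSpace.comap (Z j) inferInstance) i hi)
  | zero => exact measurable_const
  | add g h _ _ hg hh => exact hg.add hh
  | smul c g _ hg => exact hg.const_smul c

lemma ProbabilityTheory.iIndepFun.indepFun_of_mem_spanWithConst {i : ι} (hind : iIndepFun Z μ)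
    (hZ : ∀ j, Measurable (Z j)) (hi : i ∉ T) (hf : f ∈ spanWithConst Z T) :
    IndepFun (Z i) f μ := by
  have h := indep_iSup_of_disjoint (fun j => (hZ j).comap_le) hind.iIndep
    (Set.disjoint_singleton_left.2 hi)
  rw [IndepFun_iff_Indep]
  refine indep_of_indep_of_le_right (indep_of_indep_of_le_left h ?_)
    (measurable_of_mem_spanWithConst hf).comap_le
  exact le_iSup₂ (f := fun j (_ : j ∈ ({i} : Set ι)) =>
    MeasurableSpace.comap (Z j) inferInstance) i rfl

lemma ProbabilityTheory.iIndepFun.variance_smul_add_of_mem_spanWithConst [IsFiniteMeasure μ]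
    {i : ι} (c : ℝ) (hind : iIndepFun Z μ) (hZ : ∀ j, Measurable (Z j)) (hZi : MemLp (Z i) 2 μ)
    (hZT : ∀ j ∈ T, MemLp (Z j) 2 μ) (hi : i ∉ T) (hf : f ∈ spanWithConst Z T) :
    variance (c • Z i + f) μ = c ^ 2 * variance (Z i) μ + variance f μ := by
  rw [IndepFun.variance_add (hZi.const_smul c) (memLp_of_mem_spanWithConst hZT hf)
    ((hind.indepFun_of_mem_spanWithConst hZ hi hf).comp (measurable_const_smul c) measurable_id),
    variance_smul]
end General

section Model
variable {Ω : Type*} (S : Submodule ℝ (Ω → ℝ)) {J : ℕ} {μc β : ℝ} {θ : ℕ → ℝ}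
  {α : ℕ → Ω → ℝ} {ε : ℕ → ℕ → Ω → ℝ} {Y : ℕ → ℕ → Ω → ℝ} {A B : ℕ → Ω → ℝ}

lemma outcome_sub_error_mem (h1 : (1 : Ω → ℝ) ∈ S)
    (hY : ∀ i j ω, Y i j ω = μc + α i ω + θ j + (if i < j then β else 0) + ε i j ω)
    {i : ℕ} (hα : α i ∈ S) (j : ℕ) : Y i j - ε i j ∈ S := by
  have hYε : Y i j - ε i j = (μc + θ j + if i < j then β else 0) • 1 + α i := by
    ext ω; simp only [Pi.sub_apply, Pi.add_apply, Pi.smul_apply, hY, Pi.one_apply, smul_eq_mul]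
    ring
  rw [hYε]
  exact S.add_mem (S.smul_mem _ h1) hα

lemma withinPeriodContrast_mem
    (hA : ∀ j ω, A j ω = ((j : ℝ) - 1)⁻¹ * ∑ i ∈ Icc 1 (j - 1), Y i j ω
        - ((J : ℝ) - (j : ℝ))⁻¹ * ∑ i ∈ Icc j (J - 1), Y i j ω)
    {j : ℕ} (hj : j ∈ Icc 1 J) (hYS : ∀ i ∈ Icc 1 (J - 1), Y i j ∈ S) : A j ∈ S := by
  have hAj : A j = ((j : ℝ) - 1)⁻¹ • ∑ i ∈ Icc 1 (j - 1), Y i j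
      - ((J : ℝ) - (j : ℝ))⁻¹ • ∑ i ∈ Icc j (J - 1), Y i j := by
    ext ω; simp only [hA, Pi.sub_apply, Pi.smul_apply, Finset.sum_apply, smul_eq_mul]
  rw [hAj]
  refine S.sub_mem (S.smul_mem _ (S.sum_mem fun i hi => hYS i ?_))
    (S.smul_mem _ (S.sum_mem fun i hi => hYS i ?_)) <;> simp only [mem_Icc] at hi hj ⊢ <;> omega

lemma crossoverContrast_add_mem
    (hB : ∀ j ω, B j ω = Y (j - 1) j ω - Y (j - 1) (j - 1) ω
        - ((J : ℝ) - (j : ℝ))⁻¹ * ∑ l ∈ Icc j (J - 1), (Y l j ω - Y l (j - 1) ω))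
    {j : ℕ} (hYS : Y (j - 1) j ∈ S) (hYS' : ∀ l ∈ Icc j (J - 1), Y l j ∈ S ∧ Y l (j - 1) ∈ S) :
    B j + Y (j - 1) (j - 1) ∈ S := by
  have hBj : B j + Y (j - 1) (j - 1) = Y (j - 1) j
      - ((J : ℝ) - (j : ℝ))⁻¹ • ∑ l ∈ Icc j (J - 1), (Y l j - Y l (j - 1)) := by
    ext ω
    simp only [hB, Pi.add_apply, Pi.sub_apply, Pi.smul_apply, Finset.sum_apply, smul_eq_mul]
    ring
  rw [hBj]
  exact S.sub_mem hYS (S.smul_mem _ (S.sum_mem fun l hl => S.sub_mem (hYS' l hl).1 (hYS' l hl).2))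

lemma withinPeriodEstimator_mem {v : ℕ → ℝ} {βNPWP : Ω → ℝ}
    (hA : ∀ j ω, A j ω = ((j : ℝ) - 1)⁻¹ * ∑ i ∈ Icc 1 (j - 1), Y i j ω
        - ((J : ℝ) - (j : ℝ))⁻¹ * ∑ i ∈ Icc j (J - 1), Y i j ω)
    (hNPWP : ∀ ω, βNPWP ω = ∑ j ∈ Icc 2 (J - 1), v j * A j ω)
    (hYS : ∀ i ∈ Icc 1 (J - 1), ∀ j ∈ Icc 2 (J - 1), Y i j ∈ S) : βNPWP ∈ S := by
  have hN : βNPWP = ∑ j ∈ Icc 2 (J - 1), v j • A j := by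
    ext ω; simp only [hNPWP, Finset.sum_apply, Pi.smul_apply, smul_eq_mul]
  rw [hN]
  refine S.sum_mem fun j hj =>
    S.smul_mem _ (withinPeriodContrast_mem S hA ?_ fun i hi => hYS i hi j hj)
  simp only [mem_Icc] at hj ⊢
  omega

lemma crossoverEstimator_add_mem (hJ : 3 ≤ J) {w : ℕ → ℝ} {βCO : Ω → ℝ}
    (hB : ∀ j ω, B j ω = Y (j - 1) j ω - Y (j - 1) (j - 1) ω
        - ((J : ℝ) - (j : ℝ))⁻¹ * ∑ l ∈ Icc j (J - 1), (Y l j ω - Y l (j - 1) ω))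
    (hCO : ∀ ω, βCO ω = ∑ j ∈ Icc 2 (J - 1), w j * B j ω)
    (hYS : ∀ i ∈ Icc 1 (J - 1), ∀ j ∈ Icc 1 J, (i, j) ≠ (1, 1) → Y i j ∈ S)
    (hY11 : Y 1 1 - ε 1 1 ∈ S) : βCO + w 2 • ε 1 1 ∈ S := by
  have hBS : ∀ j ∈ Icc 2 (J - 1), B j + (if j = 2 then ε 1 1 else 0) ∈ S := by
    intro j hj
    have hBY : B j + Y (j - 1) (j - 1) ∈ S := by
      refine crossoverContrast_add_mem S hB (hYS _ ?_ _ ?_ ?_)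
        fun l hl => ⟨hYS _ ?_ _ ?_ ?_, hYS _ ?_ _ ?_ ?_⟩
      all_goals simp only [mem_Icc, ne_eq, Prod.mk.injEq] at *; omega
    split_ifs with h2
    · subst h2
      convert S.sub_mem hBY hY11 using 1
      abel
    · have hYjj : Y (j - 1) (j - 1) ∈ S := by
        refine hYS _ ?_ _ ?_ ?_ <;> simp only [mem_Icc, ne_eq, Prod.mk.injEq] at hj ⊢ <;> omega
      simpa using S.sub_mem hBY hYjj
  have hC : βCO + w 2 • ε 1 1
      = ∑ j ∈ Icc 2 (J - 1), w j • (B j + if j = 2 then ε 1 1 else 0) := by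
    simp only [smul_add, Finset.sum_add_distrib, smul_ite, smul_zero, Finset.sum_ite_eq',
      mem_Icc, show 2 ≤ J - 1 by omega, le_refl, and_self, if_true]
    congr 1
    ext ω; simp only [hCO, Finset.sum_apply, Pi.smul_apply, smul_eq_mul]
  rw [hC]
  exact S.sum_mem fun j hj => S.smul_mem _ (hBS j hj)

end Model

section Effects
variable {Ω : Type*} {J : ℕ} {α : ℕ → Ω → ℝ} {ε : ℕ → ℕ → Ω → ℝ}

def EffectIndex (J : ℕ) : Type :=
  {x : ℕ ⊕ ℕ × ℕ // (∀ i, x = Sum.inl i → i ∈ Icc 1 (J - 1)) ∧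
      (∀ i j, x = Sum.inr (i, j) → i ∈ Icc 1 (J - 1) ∧ j ∈ Icc 1 J)}

def effect (α : ℕ → Ω → ℝ) (ε : ℕ → ℕ → Ω → ℝ) (x : EffectIndex J) : Ω → ℝ :=
  Sum.elim α (fun q => ε q.1 q.2) x.1

variable (J α ε) in
def cornerFreeSpan : Submodule ℝ (Ω → ℝ) :=
  spanWithConst (effect (J := J) α ε) {x | x.1 ≠ Sum.inr (1, 1)}

lemma one_mem_cornerFreeSpan : (1 : Ω → ℝ) ∈ cornerFreeSpan J α ε :=
  Submodule.subset_span (Set.mem_insert _ _)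

lemma effect_mem_cornerFreeSpan {x : EffectIndex J} (hx : x.1 ≠ Sum.inr (1, 1)) :
    effect α ε x ∈ cornerFreeSpan J α ε :=
  Submodule.subset_span (Set.mem_insert_of_mem _ ⟨x, hx, rfl⟩)

lemma alpha_mem_cornerFreeSpan {i : ℕ} (hi : i ∈ Icc 1 (J - 1)) :
    α i ∈ cornerFreeSpan J α ε :=
  effect_mem_cornerFreeSpan
    (x := ⟨Sum.inl i, fun _ h => Sum.inl_injective h ▸ hi, fun _ _ h => (Sum.inl_ne_inr h).elim⟩)
    Sum.inl_ne_inr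

lemma epsilon_mem_cornerFreeSpan {i j : ℕ} (hi : i ∈ Icc 1 (J - 1)) (hj : j ∈ Icc 1 J)
    (hij : (i, j) ≠ (1, 1)) : ε i j ∈ cornerFreeSpan J α ε :=
  effect_mem_cornerFreeSpan
    (x := ⟨Sum.inr (i, j), fun _ h => (Sum.inr_ne_inl h).elim,
      fun _ _ h => by cases h; exact ⟨hi, hj⟩⟩)
    (by simpa using hij)

variable [MeasureSpace Ω]

lemma memLp_effect (hL2α : ∀ i ∈ Icc 1 (J - 1), MemLp (α i) 2 ℙ)
    (hL2ε : ∀ i ∈ Icc 1 (J - 1), ∀ j ∈ Icc 1 J, MemLp (ε i j) 2 ℙ) (x : EffectIndex J) :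
    MemLp (effect α ε x) 2 ℙ := by
  obtain ⟨i | ⟨i, j⟩, hx⟩ := x
  · exact hL2α i (hx.1 i rfl)
  · exact hL2ε i (hx.2 i j rfl).1 j (hx.2 i j rfl).2

lemma variance_smul_corner_add [IsProbabilityMeasure (ℙ : Measure Ω)] (hJ : 2 ≤ J)
    (hmα : ∀ i, Measurable (α i)) (hmε : ∀ i j, Measurable (ε i j))
    (hindep : iIndepFun (effect (J := J) α ε) ℙ)
    (hL2α : ∀ i ∈ Icc 1 (J - 1), MemLp (α i) 2 ℙ)
    (hL2ε : ∀ i ∈ Icc 1 (J - 1), ∀ j ∈ Icc 1 J, MemLp (ε i j) 2 ℙ)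
    (c : ℝ) {g : Ω → ℝ} (hg : g ∈ cornerFreeSpan J α ε) :
    variance (c • ε 1 1 + g) ℙ = c ^ 2 * variance (ε 1 1) ℙ + variance g ℙ := by
  have h1 : 1 ∈ Icc 1 (J - 1) := by simp only [mem_Icc]; omega
  have h1' : 1 ∈ Icc 1 J := by simp only [mem_Icc]; omega
  let corner : EffectIndex J := ⟨Sum.inr (1, 1), fun _ h => (Sum.inr_ne_inl h).elim,
    fun _ _ h => by cases h; exact ⟨h1, h1'⟩⟩
  have hmeas (x : EffectIndex J) : Measurable (effect α ε x) := by
    obtain ⟨i | ⟨i, j⟩, _⟩ := x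
    exacts [hmα i, hmε i j]
  exact hindep.variance_smul_add_of_mem_spanWithConst (i := corner) c hmeas
    (memLp_effect hL2α hL2ε corner) (fun x _ => memLp_effect hL2α hL2ε x)
    (fun h : corner.1 ≠ _ => h rfl) hg

end Effects

theorem stmt_19_general
    {Ω : Type*} [MeasureSpace Ω] [IsProbabilityMeasure (ℙ : Measure Ω)]
    (J : ℕ) (hJ : 3 ≤ J)
    (μc β : ℝ) (θ : ℕ → ℝ) (σsq : ℕ → ℕ → ℝ)
    (α : ℕ → Ω → ℝ) (ε : ℕ → ℕ → Ω → ℝ)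
    (hmα : ∀ i, Measurable (α i)) (hmε : ∀ i j, Measurable (ε i j))
    -- the random variables {α_i} ∪ {ε_{i,j}} are mutually independent
    (hindep : iIndepFun
      (fun x : {x : ℕ ⊕ ℕ × ℕ // (∀ i, x = Sum.inl i → i ∈ Icc 1 (J - 1)) ∧
          (∀ i j, x = Sum.inr (i, j) → i ∈ Icc 1 (J - 1) ∧ j ∈ Icc 1 J)} =>
        Sum.elim α (fun q => ε q.1 q.2) x.1) ℙ)
    -- moment assumptions
    (hL2α : ∀ i ∈ Icc 1 (J - 1), MemLp (α i) 2 ℙ)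
    (hVε : ∀ i ∈ Icc 1 (J - 1), ∀ j ∈ Icc 1 J, variance (ε i j) ℙ = σsq i j)
    (hL2ε : ∀ i ∈ Icc 1 (J - 1), ∀ j ∈ Icc 1 J, MemLp (ε i j) 2 ℙ)
    -- the mixed effects model: cluster i is on intervention in periods j > i
    (Y : ℕ → ℕ → Ω → ℝ)
    (hY : ∀ i j ω, Y i j ω = μc + α i ω + θ j + (if i < j then β else 0) + ε i j ω)
    -- the within-period contrast A_j
    (A : ℕ → Ω → ℝ)
    (hA : ∀ j ω, A j ω = ((j : ℝ) - 1)⁻¹ * ∑ i ∈ Icc 1 (j - 1), Y i j ω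
        - ((J : ℝ) - (j : ℝ))⁻¹ * ∑ i ∈ Icc j (J - 1), Y i j ω)
    -- the crossover contrast B_j
    (B : ℕ → Ω → ℝ)
    (hB : ∀ j ω, B j ω = Y (j - 1) j ω - Y (j - 1) (j - 1) ω
        - ((J : ℝ) - (j : ℝ))⁻¹ * ∑ l ∈ Icc j (J - 1), (Y l j ω - Y l (j - 1) ω))
    -- the non-parametric within-period estimator with deterministic weights v
    (v : ℕ → ℝ) (βNPWP : Ω → ℝ)
    (hNPWP : ∀ ω, βNPWP ω = ∑ j ∈ Icc 2 (J - 1), v j * A j ω)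
    -- the crossover estimator with deterministic weights w
    (w : ℕ → ℝ) (βCO : Ω → ℝ)
    (hCO : ∀ ω, βCO ω = ∑ j ∈ Icc 2 (J - 1), w j * B j ω)
    -- homoskedastic errors
    (σ2 : ℝ) (hσ : ∀ i ∈ Icc 1 (J - 1), ∀ j ∈ Icc 1 J, σsq i j = σ2)
    -- weight assumptions
    (hσ2pos : 0 < σ2)
    (hw0 : ∀ j ∈ Icc 2 (J - 1), 0 < w j)
    -- equal variances and the ensemble estimator
    (hvar : variance βNPWP ℙ = variance βCO ℙ)
    (βENS : Ω → ℝ) (hENS : ∀ ω, βENS ω = (1 / 2) * βNPWP ω + (1 / 2) * βCO ω)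
    :
    variance βENS ℙ < variance βNPWP ℙ ∧ variance βENS ℙ < variance βCO ℙ := by
  set S := cornerFreeSpan J α ε
  have h1 : 1 ∈ Icc 1 (J - 1) := by simp only [mem_Icc]; omega
  have h1' : 1 ∈ Icc 1 J := by simp only [mem_Icc]; omega
  have hYS : ∀ i ∈ Icc 1 (J - 1), ∀ j ∈ Icc 1 J, (i, j) ≠ (1, 1) → Y i j ∈ S :=
    fun i hi j hj hij => by
      simpa using S.add_mem (outcome_sub_error_mem S one_mem_cornerFreeSpan hY
        (alpha_mem_cornerFreeSpan hi) j) (epsilon_mem_cornerFreeSpan hi hj hij)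
  have hNS : βNPWP ∈ S := withinPeriodEstimator_mem S hA hNPWP fun i hi j hj => by
    refine hYS i hi j ?_ ?_ <;> simp only [mem_Icc, ne_eq, Prod.mk.injEq] at hj ⊢ <;> omega
  have hCS : βCO + w 2 • ε 1 1 ∈ S := crossoverEstimator_add_mem S hJ hB hCO hYS
    (outcome_sub_error_mem S one_mem_cornerFreeSpan hY (alpha_mem_cornerFreeSpan h1) 1)
  have hZ : ∀ x ∈ {x : EffectIndex J | x.1 ≠ Sum.inr (1, 1)}, MemLp (effect α ε x) 2 ℙ :=
    fun x _ => memLp_effect hL2α hL2ε x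
  have hN : MemLp βNPWP 2 ℙ := memLp_of_mem_spanWithConst hZ hNS
  have hC : MemLp βCO 2 ℙ := by
    simpa using (memLp_of_mem_spanWithConst hZ hCS).sub ((hL2ε 1 h1 1 h1').const_smul (w 2))
  have hdiff : 0 < variance (βNPWP - βCO) ℙ := by
    rw [show βNPWP - βCO = w 2 • ε 1 1 + (βNPWP - (βCO + w 2 • ε 1 1)) by abel,
      variance_smul_corner_add (by omega) hmα hmε hindep hL2α hL2ε _ (S.sub_mem hNS hCS),
      hVε 1 h1 1 h1', hσ 1 h1 1 h1']
    have := hw0 2 (by simp only [mem_Icc]; omega)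
    have := variance_nonneg (βNPWP - (βCO + w 2 • ε 1 1)) ℙ
    positivity
  rw [show βENS = _ from funext hENS, variance_half_add_half hN hC, ← hvar]
  constructor <;> linarith

/-- **The ensemble estimator has strictly smaller variance than either single estimator**
under homoskedastic errors, nonnegative weights summing to one, positive crossover weights,
`v_j ≤ 2 w_j`, and `τ²` such that `Var(β̂^NPWP) = Var(β̂^CO)`. -/
theorem stmt_19
    {Ω : Type*} [MeasureSpace Ω] [IsProbabilityMeasure (ℙ : Measure Ω)]
    (J : ℕ) (hJ : 3 ≤ J)
    (μc β τsq : ℝ) (θ : ℕ → ℝ) (σsq : ℕ → ℕ → ℝ)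
    (α : ℕ → Ω → ℝ) (ε : ℕ → ℕ → Ω → ℝ)
    (hmα : ∀ i, Measurable (α i)) (hmε : ∀ i j, Measurable (ε i j))
    -- the random variables {α_i} ∪ {ε_{i,j}} are mutually independent
    (hindep : iIndepFun
      (fun x : {x : ℕ ⊕ ℕ × ℕ // (∀ i, x = Sum.inl i → i ∈ Icc 1 (J - 1)) ∧
          (∀ i j, x = Sum.inr (i, j) → i ∈ Icc 1 (J - 1) ∧ j ∈ Icc 1 J)} =>
        Sum.elim α (fun q => ε q.1 q.2) x.1) ℙ)
    -- moment assumptions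
    (hEα : ∀ i ∈ Icc 1 (J - 1), ∫ ω, α i ω ∂ℙ = 0)
    (hVα : ∀ i ∈ Icc 1 (J - 1), variance (α i) ℙ = τsq)
    (hL2α : ∀ i ∈ Icc 1 (J - 1), MemLp (α i) 2 ℙ)
    (hEε : ∀ i ∈ Icc 1 (J - 1), ∀ j ∈ Icc 1 J, ∫ ω, ε i j ω ∂ℙ = 0)
    (hVε : ∀ i ∈ Icc 1 (J - 1), ∀ j ∈ Icc 1 J, variance (ε i j) ℙ = σsq i j)
    (hL2ε : ∀ i ∈ Icc 1 (J - 1), ∀ j ∈ Icc 1 J, MemLp (ε i j) 2 ℙ)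
    -- the mixed effects model: cluster i is on intervention in periods j > i
    (Y : ℕ → ℕ → Ω → ℝ)
    (hY : ∀ i j ω, Y i j ω = μc + α i ω + θ j + (if i < j then β else 0) + ε i j ω)
    -- the within-period contrast A_j
    (A : ℕ → Ω → ℝ)
    (hA : ∀ j ω, A j ω = ((j : ℝ) - 1)⁻¹ * ∑ i ∈ Icc 1 (j - 1), Y i j ω
        - ((J : ℝ) - (j : ℝ))⁻¹ * ∑ i ∈ Icc j (J - 1), Y i j ω)
    -- the crossover contrast B_j
    (B : ℕ → Ω → ℝ)
    (hB : ∀ j ω, B j ω = Y (j - 1) j ω - Y (j - 1) (j - 1) ω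
        - ((J : ℝ) - (j : ℝ))⁻¹ * ∑ l ∈ Icc j (J - 1), (Y l j ω - Y l (j - 1) ω))
    -- the non-parametric within-period estimator with deterministic weights v
    (v : ℕ → ℝ) (βNPWP : Ω → ℝ)
    (hNPWP : ∀ ω, βNPWP ω = ∑ j ∈ Icc 2 (J - 1), v j * A j ω)
    -- the crossover estimator with deterministic weights w
    (w : ℕ → ℝ) (βCO : Ω → ℝ)
    (hCO : ∀ ω, βCO ω = ∑ j ∈ Icc 2 (J - 1), w j * B j ω)
    -- homoskedastic errors
    (σ2 : ℝ) (hσ : ∀ i ∈ Icc 1 (J - 1), ∀ j ∈ Icc 1 J, σsq i j = σ2)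
    -- weight assumptions
    (hσ2pos : 0 < σ2)
    (hv0 : ∀ j ∈ Icc 2 (J - 1), 0 ≤ v j) (hw0 : ∀ j ∈ Icc 2 (J - 1), 0 < w j)
    (hvsum : ∑ j ∈ Icc 2 (J - 1), v j = 1) (hwsum : ∑ j ∈ Icc 2 (J - 1), w j = 1)
    (hvw : ∀ j ∈ Icc 2 (J - 1), v j ≤ 2 * w j)
    -- equal variances and the ensemble estimator
    (hvar : variance βNPWP ℙ = variance βCO ℙ)
    (βENS : Ω → ℝ) (hENS : ∀ ω, βENS ω = (1 / 2) * βNPWP ω + (1 / 2) * βCO ω)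
    :
    variance βENS ℙ < variance βNPWP ℙ ∧ variance βENS ℙ < variance βCO ℙ :=
  stmt_19_general J hJ μc β θ σsq α ε hmα hmε hindep hL2α hVε hL2ε Y hY A hA B hB v βNPWP hNPWP w
    βCO hCO σ2 hσ hσ2pos hw0 hvar βENS hENS
end
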